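/- arXiv:1805.06040 — 9 statements merged into one kernel-verified Lean document; each statement's English description precedes it below -/
import Mathlib

section
/- Extension of Hamilton–Jacobi subsolutions: let (X, Q, π) be a Markov triple, Λ an admissible mean, and Y ⊆ X a connected subset having the retraction property with retraction T : X → Y. If φ ∈ C¹([0,T'], ℝ^Y) is a Hamilton–Jacobi subsolution for the restricted Markov triple (Y, Q|_{Y×Y}), then the map φ̄ defined by φ̄_t := φ_t ∘ T is a Hamilton–Jacobi subsolution on X extending φ (i.e. φ̄_t|_Y = φ_t for all t). -/
open MeasureTheory
open scoped ENNReal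

section Prelude

variable {X : Type*}

/-- A probability measure on a finite set, identified with its density. -/
def IsProb [Fintype X] (μ : X → ℝ) : Prop :=
  (∀ x, 0 ≤ μ x) ∧ ∑ x, μ x = 1

/-- An admissible mean in the sense of Erbar–Maas–Wirth. -/
structure AdmissibleMean (Λ : ℝ → ℝ → ℝ) : Prop where
  contOn : ContinuousOn (fun p : ℝ × ℝ => Λ p.1 p.2) (Set.Ici 0 ×ˢ Set.Ici 0)
  smoothOn : ContDiffOn ℝ (⊤ : ℕ∞) (fun p : ℝ × ℝ => Λ p.1 p.2) (Set.Ioi 0 ×ˢ Set.Ioi 0)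
  symm : ∀ s t, Λ s t = Λ t s
  homog : ∀ c s t, 0 ≤ c → 0 ≤ s → 0 ≤ t → Λ (c * s) (c * t) = c * Λ s t
  mono : ∀ s s' t, 0 ≤ s → s ≤ s' → 0 ≤ t → Λ s t ≤ Λ s' t
  concave : ConcaveOn ℝ (Set.Ici 0 ×ˢ Set.Ici 0) (fun p : ℝ × ℝ => Λ p.1 p.2)
  nonneg : ∀ s t, 0 ≤ s → 0 ≤ t → 0 ≤ Λ s t
  normalized : Λ 1 1 = 1

/-- The convex lsc integrand `A(s,t,w)`, with values in `[0,∞]`. -/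
noncomputable def Afun (Λ : ℝ → ℝ → ℝ) (s t w : ℝ) : ℝ≥0∞ :=
  if 0 < s ∧ 0 < t then ENNReal.ofReal (w ^ 2 / Λ s t)
  else if w = 0 ∧ 0 ≤ s ∧ 0 ≤ t then 0
  else ⊤

/-- The action `𝒜(μ, V)`. -/
noncomputable def action [Fintype X] (Λ : ℝ → ℝ → ℝ) (Q : X → X → ℝ)
    (μ : X → ℝ) (V : X → X → ℝ) : ℝ≥0∞ :=
  (∑ x, ∑ y, Afun Λ (μ x * Q x y) (μ y * Q y x) (V x y)) / 2

/-- The pairing `⟨f, μ⟩ = ∑ₓ f(x) μ(x)`. -/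
def dotp [Fintype X] (f μ : X → ℝ) : ℝ := ∑ x, f x * μ x

/-- The squared discrete gradient norm `‖∇ψ‖²_μ`. -/
noncomputable def gradSq [Fintype X] (Λ : ℝ → ℝ → ℝ) (Q : X → X → ℝ)
    (μ ψ : X → ℝ) : ℝ :=
  (1 / 2) * ∑ x, ∑ y, Λ (μ x * Q x y) (μ y * Q y x) * (ψ y - ψ x) ^ 2

/-- `C¹` Hamilton–Jacobi subsolutions on `[0, T]`. -/
def IsHJ [Fintype X] (Λ : ℝ → ℝ → ℝ) (Q : X → X → ℝ) (T : ℝ) (φ : ℝ → X → ℝ) : Prop :=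
  ∃ φ' : ℝ → X → ℝ,
    (∀ x, ContinuousOn (fun t => φ' t x) (Set.Icc 0 T)) ∧
    (∀ x, ∀ t ∈ Set.Icc (0 : ℝ) T,
      HasDerivWithinAt (fun s => φ s x) (φ' t x) (Set.Icc 0 T) t) ∧
    (∀ t ∈ Set.Icc (0 : ℝ) T, ∀ μ : X → ℝ, IsProb μ →
      dotp (φ' t) μ + (1 / 2) * gradSq Λ Q μ (φ t) ≤ 0)

/-- The continuity equation on the time interval `[0,1]`. -/
def IsCE1 [Fintype X] (μ0 μ1 : X → ℝ) (μ : ℝ → X → ℝ) (V : ℝ → X → X → ℝ) : Prop :=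
  (∀ x, ContinuousOn (fun t => μ t x) (Set.Icc 0 1)) ∧
  (∀ x y, IntervalIntegrable (fun s => V s x y) volume 0 1) ∧
  (∀ t ∈ Set.Icc (0 : ℝ) 1, IsProb (μ t)) ∧
  μ 0 = μ0 ∧ μ 1 = μ1 ∧
  (∀ x, ∀ t ∈ Set.Icc (0 : ℝ) 1,
    μ t x = μ0 x - ∫ s in (0 : ℝ)..t, (1 / 2) * ∑ y, (V s x y - V s y x))

/-- Total action of a curve. -/
noncomputable def curveAction [Fintype X] (Λ : ℝ → ℝ → ℝ) (Q : X → X → ℝ)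
    (μ : ℝ → X → ℝ) (V : ℝ → X → X → ℝ) : ℝ≥0∞ :=
  ∫⁻ t in Set.Icc (0 : ℝ) 1, action Λ Q (μ t) (V t)

/-- The squared discrete transport distance `W(μ0, μ1)²`. -/
noncomputable def Wsq [Fintype X] (Λ : ℝ → ℝ → ℝ) (Q : X → X → ℝ)
    (μ0 μ1 : X → ℝ) : ℝ≥0∞ :=
  ⨅ (μ : ℝ → X → ℝ) (V : ℝ → X → X → ℝ) (_ : IsCE1 μ0 μ1 μ V), curveAction Λ Q μ V

/-- A Markov triple: nonnegative irreducible rates, vanishing on the diagonal,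
reversible w.r.t. the strictly positive probability measure `pm`. -/
def IsMarkovTriple [Fintype X] (Q : X → X → ℝ) (pm : X → ℝ) : Prop :=
  (∀ x y, 0 ≤ Q x y) ∧ (∀ x, Q x x = 0) ∧
  (∀ x y, Relation.ReflTransGen (fun a b => 0 < Q a b) x y) ∧
  IsProb pm ∧ (∀ x, 0 < pm x) ∧ (∀ x y, pm x * Q x y = pm y * Q y x)

/-- A subset is connected if any two of its points are joined by a path inside it
along which `Q` is positive. -/
def IsConnectedSubset (Q : X → X → ℝ) (Y : Set X) : Prop :=
  ∀ y ∈ Y, ∀ y' ∈ Y, Relation.ReflTransGen (fun a b => b ∈ Y ∧ 0 < Q a b) y y'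

/-- `T` is a retraction of `X` onto `Y`. -/
def IsRetraction [Fintype X] [DecidableEq X] (Q : X → X → ℝ) (Y : Set X) (T : X → X) : Prop :=
  (∀ x, T x ∈ Y) ∧ (∀ y ∈ Y, T y = y) ∧
  ∀ y ∈ Y, ∀ y' ∈ Y, y ≠ y' → ∀ x, T x = y →
    (∑ x' ∈ Finset.univ.filter (fun x' => T x' = y'), Q x x') ≤ Q y y'

/-- `Y` has the retraction property. -/
def HasRetractionProperty [Fintype X] [DecidableEq X] (Q : X → X → ℝ) (Y : Set X) : Prop :=
  IsConnectedSubset Q Y ∧ ∃ T : X → X, IsRetraction Q Y T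

end Prelude

section Aux

lemma lam_zero {Λ : ℝ → ℝ → ℝ} (hΛ : AdmissibleMean Λ) : Λ 0 0 = 0 := by
  have := hΛ.homog 0 1 1 le_rfl zero_le_one zero_le_one
  simpa using this

lemma lam_superadd {Λ : ℝ → ℝ → ℝ} (hΛ : AdmissibleMean Λ) {a b c d : ℝ}
    (ha : 0 ≤ a) (hb : 0 ≤ b) (hc : 0 ≤ c) (hd : 0 ≤ d) :
    Λ a c + Λ b d ≤ Λ (a + b) (c + d) := by
  have hmem1 : ((a, c) : ℝ × ℝ) ∈ Set.Ici (0:ℝ) ×ˢ Set.Ici (0:ℝ) := ⟨ha, hc⟩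
  have hmem2 : ((b, d) : ℝ × ℝ) ∈ Set.Ici (0:ℝ) ×ˢ Set.Ici (0:ℝ) := ⟨hb, hd⟩
  have hcc := hΛ.concave.2 hmem1 hmem2 (by norm_num : (0:ℝ) ≤ 1/2)
    (by norm_num : (0:ℝ) ≤ 1/2) (by norm_num : (1:ℝ)/2 + 1/2 = 1)
  simp only [Prod.smul_mk, smul_eq_mul, Prod.mk_add_mk] at hcc
  have hh := hΛ.homog ((1:ℝ)/2) (a + b) (c + d) (by norm_num)
    (by linarith) (by linarith)
  have : (1:ℝ)/2 * Λ a c + (1:ℝ)/2 * Λ b d ≤ (1:ℝ)/2 * Λ (a+b) (c+d) := by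
    calc (1:ℝ)/2 * Λ a c + (1:ℝ)/2 * Λ b d
        ≤ Λ ((1:ℝ)/2 * a + (1:ℝ)/2 * b) ((1:ℝ)/2 * c + (1:ℝ)/2 * d) := hcc
      _ = (1:ℝ)/2 * Λ (a+b) (c+d) := by rw [← hh]; ring_nf
  linarith

lemma lam_sum_superadd {Λ : ℝ → ℝ → ℝ} (hΛ : AdmissibleMean Λ) {ι : Type*}
    (s : Finset ι) (f g : ι → ℝ) (hf : ∀ i ∈ s, 0 ≤ f i) (hg : ∀ i ∈ s, 0 ≤ g i) :
    ∑ i ∈ s, Λ (f i) (g i) ≤ Λ (∑ i ∈ s, f i) (∑ i ∈ s, g i) := by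
  induction s using Finset.cons_induction with
  | empty => simp [lam_zero hΛ]
  | cons a s ha ih =>
    simp only [Finset.sum_cons]
    have hf' : ∀ i ∈ s, 0 ≤ f i := fun i hi => hf i (Finset.mem_cons_of_mem hi)
    have hg' : ∀ i ∈ s, 0 ≤ g i := fun i hi => hg i (Finset.mem_cons_of_mem hi)
    have h1 := ih hf' hg'
    have h2 := lam_superadd hΛ (hf a (Finset.mem_cons_self a s))
      (Finset.sum_nonneg hf') (hg a (Finset.mem_cons_self a s)) (Finset.sum_nonneg hg')
    linarith

end Aux


/-- **Extension of Hamilton–Jacobi subsolutions** (Theorem 4.10): if `Y ⊆ X` is connected and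
has the retraction property with retraction `r`, then every Hamilton–Jacobi subsolution `φ` on
the restricted Markov triple `(Y, Q|_{Y×Y})` extends, via `φ̄_t := φ_t ∘ r`, to a
Hamilton–Jacobi subsolution on `X`. -/
theorem hj_extension {X : Type*} [Fintype X] [DecidableEq X]
    (Λ : ℝ → ℝ → ℝ) (Q : X → X → ℝ) (pm : X → ℝ)
    (hMT : IsMarkovTriple Q pm) (hΛ : AdmissibleMean Λ)
    (Y : Set X) [DecidablePred (· ∈ Y)] (hYconn : IsConnectedSubset Q Y)
    (r : X → X) (hr : IsRetraction Q Y r)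
    (Thor : ℝ) (φ : ℝ → ↥Y → ℝ)
    (hφ : IsHJ Λ (fun s s' : ↥Y => Q ↑s ↑s') Thor φ) :
    IsHJ Λ Q Thor (fun t x => φ t ⟨r x, hr.1 x⟩) ∧
      ∀ (t : ℝ) (y : ↥Y), φ t ⟨r ↑y, hr.1 ↑y⟩ = φ t y := by
  obtain ⟨φ', hcont, hderiv, hineq⟩ := hφ
  have hext : ∀ (t : ℝ) (y : ↥Y), φ t ⟨r ↑y, hr.1 ↑y⟩ = φ t y := by
    intro t y
    congr 1
    exact Subtype.ext (hr.2.1 ↑y y.2)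
  refine ⟨?_, hext⟩
  set g : X → ↥Y := fun x => ⟨r x, hr.1 x⟩ with hg
  refine ⟨fun t x => φ' t (g x), fun x => hcont (g x), fun x t ht => hderiv (g x) t ht, ?_⟩
  intro t ht μ hμ
  classical
  set ν : ↥Y → ℝ := fun y => ∑ x ∈ Finset.univ.filter (fun x => g x = y), μ x with hν
  have hνnonneg : ∀ y, 0 ≤ ν y := fun y => Finset.sum_nonneg fun x _ => hμ.1 x
  have hνprob : IsProb ν := by
    refine ⟨hνnonneg, ?_⟩
    rw [hν]
    rw [Finset.sum_fiberwise Finset.univ g μ]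
    exact hμ.2
  have hQnn : ∀ x y, 0 ≤ Q x y := hMT.1
  -- dot product identity
  have hdot : dotp (fun x => φ' t (g x)) μ = dotp (φ' t) ν := by
    unfold dotp
    rw [← Finset.sum_fiberwise Finset.univ g (fun x => φ' t (g x) * μ x)]
    refine Finset.sum_congr rfl fun y _ => ?_
    rw [hν, Finset.mul_sum]
    refine Finset.sum_congr rfl fun x hx => ?_
    rw [(Finset.mem_filter.1 hx).2]
  -- gradient inequality
  have hgrad : gradSq Λ Q μ (fun x => φ t (g x)) ≤
      gradSq Λ (fun s s' : ↥Y => Q ↑s ↑s') ν (φ t) := by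
    unfold gradSq
    have hhalf : (0:ℝ) ≤ 1/2 := by norm_num
    refine mul_le_mul_of_nonneg_left ?_ hhalf
    have step1 : ∑ x, ∑ x', Λ (μ x * Q x x') (μ x' * Q x' x) * (φ t (g x') - φ t (g x))^2
        = ∑ y : ↥Y, ∑ y' : ↥Y, ∑ x ∈ Finset.univ.filter (fun x => g x = y),
            ∑ x' ∈ Finset.univ.filter (fun x' => g x' = y'),
            Λ (μ x * Q x x') (μ x' * Q x' x) * (φ t (g x') - φ t (g x))^2 := by
      calc ∑ x, ∑ x', Λ (μ x * Q x x') (μ x' * Q x' x) * (φ t (g x') - φ t (g x))^2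
          = ∑ y : ↥Y, ∑ x ∈ Finset.univ.filter (fun x => g x = y),
              ∑ x', Λ (μ x * Q x x') (μ x' * Q x' x) * (φ t (g x') - φ t (g x))^2 :=
            (Finset.sum_fiberwise Finset.univ g
              (fun x => ∑ x', Λ (μ x * Q x x') (μ x' * Q x' x)
                * (φ t (g x') - φ t (g x))^2)).symm
        _ = ∑ y : ↥Y, ∑ x ∈ Finset.univ.filter (fun x => g x = y), ∑ y' : ↥Y,
              ∑ x' ∈ Finset.univ.filter (fun x' => g x' = y'),
              Λ (μ x * Q x x') (μ x' * Q x' x) * (φ t (g x') - φ t (g x))^2 :=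
            Finset.sum_congr rfl fun y _ => Finset.sum_congr rfl fun x _ =>
              (Finset.sum_fiberwise Finset.univ g
                (fun x' => Λ (μ x * Q x x') (μ x' * Q x' x)
                  * (φ t (g x') - φ t (g x))^2)).symm
        _ = _ := Finset.sum_congr rfl fun y _ => Finset.sum_comm
    rw [step1]
    refine Finset.sum_le_sum fun y _ => Finset.sum_le_sum fun y' _ => ?_
    by_cases hyy : y = y'
    · subst hyy
      have hz : ∀ x ∈ Finset.univ.filter (fun x => g x = y),
          ∑ x' ∈ Finset.univ.filter (fun x' => g x' = y),
            Λ (μ x * Q x x') (μ x' * Q x' x) * (φ t (g x') - φ t (g x))^2 = 0 := by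
        intro x hx
        refine Finset.sum_eq_zero fun x' hx' => ?_
        rw [(Finset.mem_filter.1 hx).2, (Finset.mem_filter.1 hx').2]
        simp
      rw [Finset.sum_eq_zero hz]
      have := hΛ.nonneg (ν y * Q ↑y ↑y) (ν y * Q ↑y ↑y)
        (mul_nonneg (hνnonneg y) (hQnn _ _)) (mul_nonneg (hνnonneg y) (hQnn _ _))
      positivity
    · -- main case
      have hyy' : (↑y : X) ≠ ↑y' := fun h => hyy (Subtype.ext h)
      have hfilter : ∀ z : ↥Y, Finset.univ.filter (fun x => g x = z)
          = Finset.univ.filter (fun x => r x = ↑z) := by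
        intro z
        refine Finset.filter_congr fun x _ => ?_
        simp [hg, Subtype.ext_iff]
      -- rewrite each term's squared factor
      have hterm : ∀ x ∈ Finset.univ.filter (fun x => g x = y),
          ∀ x' ∈ Finset.univ.filter (fun x' => g x' = y'),
          Λ (μ x * Q x x') (μ x' * Q x' x) * (φ t (g x') - φ t (g x))^2
          = Λ (μ x * Q x x') (μ x' * Q x' x) * (φ t y' - φ t y)^2 := by
        intro x hx x' hx'
        rw [(Finset.mem_filter.1 hx).2, (Finset.mem_filter.1 hx').2]
      rw [Finset.sum_congr rfl (fun x hx => Finset.sum_congr rfl fun x' hx' =>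
        hterm x hx x' hx')]
      simp only [← Finset.sum_mul]
      refine mul_le_mul_of_nonneg_right ?_ (sq_nonneg _)
      set Fy := Finset.univ.filter (fun x => g x = y) with hFy
      set Fy' := Finset.univ.filter (fun x' => g x' = y') with hFy'
      have hrmem : ∀ (z : ↥Y) (x : X), g x = z → r x = ↑z := by
        intro z x hx
        simpa [hg] using congrArg Subtype.val hx
      have hA : ∀ x ∈ Fy, ∑ x' ∈ Fy', Λ (μ x * Q x x') (μ x' * Q x' x)
          ≤ Λ (μ x * ∑ x' ∈ Fy', Q x x') (∑ x' ∈ Fy', μ x' * Q x' x) := by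
        intro x _
        have h := lam_sum_superadd hΛ Fy' (fun x' => μ x * Q x x') (fun x' => μ x' * Q x' x)
          (fun i _ => mul_nonneg (hμ.1 x) (hQnn _ _))
          (fun i _ => mul_nonneg (hμ.1 i) (hQnn _ _))
        rwa [← Finset.mul_sum] at h
      have hAnn : 0 ≤ ∑ x ∈ Fy, μ x * ∑ x' ∈ Fy', Q x x' :=
        Finset.sum_nonneg fun x _ => mul_nonneg (hμ.1 x)
          (Finset.sum_nonneg fun x' _ => hQnn _ _)
      have hBnn : 0 ≤ ∑ x ∈ Fy, ∑ x' ∈ Fy', μ x' * Q x' x :=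
        Finset.sum_nonneg fun x _ => Finset.sum_nonneg fun x' _ =>
          mul_nonneg (hμ.1 x') (hQnn _ _)
      have hAle : ∑ x ∈ Fy, μ x * (∑ x' ∈ Fy', Q x x') ≤ ν y * Q ↑y ↑y' := by
        have hstep : ∀ x ∈ Fy, μ x * (∑ x' ∈ Fy', Q x x') ≤ μ x * Q ↑y ↑y' := by
          intro x hx
          refine mul_le_mul_of_nonneg_left ?_ (hμ.1 x)
          have hrx : r x = ↑y := hrmem y x (Finset.mem_filter.1 hx).2
          have h := hr.2.2 ↑y y.2 ↑y' y'.2 hyy' x hrx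
          rwa [hFy', hfilter y']
        calc ∑ x ∈ Fy, μ x * (∑ x' ∈ Fy', Q x x') ≤ ∑ x ∈ Fy, μ x * Q ↑y ↑y' :=
              Finset.sum_le_sum hstep
          _ = ν y * Q ↑y ↑y' := by rw [hν, ← Finset.sum_mul]
      have hBle : ∑ x ∈ Fy, ∑ x' ∈ Fy', μ x' * Q x' x ≤ ν y' * Q ↑y' ↑y := by
        rw [Finset.sum_comm]
        have hstep : ∀ x' ∈ Fy', ∑ x ∈ Fy, μ x' * Q x' x ≤ μ x' * Q ↑y' ↑y := by
          intro x' hx'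
          rw [← Finset.mul_sum]
          refine mul_le_mul_of_nonneg_left ?_ (hμ.1 x')
          have hrx' : r x' = ↑y' := hrmem y' x' (Finset.mem_filter.1 hx').2
          have h := hr.2.2 ↑y' y'.2 ↑y y.2 (Ne.symm hyy') x' hrx'
          rwa [hFy, hfilter y]
        calc ∑ x' ∈ Fy', ∑ x ∈ Fy, μ x' * Q x' x ≤ ∑ x' ∈ Fy', μ x' * Q ↑y' ↑y :=
              Finset.sum_le_sum hstep
          _ = ν y' * Q ↑y' ↑y := by rw [hν, ← Finset.sum_mul]
      have hsum : ∑ x ∈ Fy, ∑ x' ∈ Fy', Λ (μ x * Q x x') (μ x' * Q x' x)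
          ≤ Λ (∑ x ∈ Fy, μ x * ∑ x' ∈ Fy', Q x x')
              (∑ x ∈ Fy, ∑ x' ∈ Fy', μ x' * Q x' x) := by
        calc ∑ x ∈ Fy, ∑ x' ∈ Fy', Λ (μ x * Q x x') (μ x' * Q x' x)
            ≤ ∑ x ∈ Fy, Λ (μ x * ∑ x' ∈ Fy', Q x x') (∑ x' ∈ Fy', μ x' * Q x' x) :=
              Finset.sum_le_sum hA
          _ ≤ _ := lam_sum_superadd hΛ Fy _ _
              (fun x _ => mul_nonneg (hμ.1 x) (Finset.sum_nonneg fun x' _ => hQnn _ _))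
              (fun x _ => Finset.sum_nonneg fun x' _ => mul_nonneg (hμ.1 x') (hQnn _ _))
      have hνQnn : 0 ≤ ν y * Q ↑y ↑y' := mul_nonneg (hνnonneg y) (hQnn _ _)
      have hνQnn' : 0 ≤ ν y' * Q ↑y' ↑y := mul_nonneg (hνnonneg y') (hQnn _ _)
      have h1 := hΛ.mono _ _ _ hAnn hAle hBnn
      have h2 : Λ (ν y * Q ↑y ↑y') (∑ x ∈ Fy, ∑ x' ∈ Fy', μ x' * Q x' x)
          ≤ Λ (ν y * Q ↑y ↑y') (ν y' * Q ↑y' ↑y) := by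
        rw [hΛ.symm (ν y * Q ↑y ↑y'), hΛ.symm (ν y * Q ↑y ↑y')]
        exact hΛ.mono _ _ _ hBnn hBle hνQnn
      linarith
  have hkey := hineq t ht ν hνprob
  have : dotp (fun x => φ' t (g x)) μ + (1/2) * gradSq Λ Q μ (fun x => φ t (g x)) ≤
      dotp (φ' t) ν + (1/2) * gradSq Λ (fun s s' : ↥Y => Q ↑s ↑s') ν (φ t) := by
    rw [hdot]
    have := hgrad
    linarith
  exact le_trans this hkey
end

section
/- Contraction of the discrete Dirichlet-type energy under a retraction: let (X, Q, π) be a Markov triple, Λ an admissible mean, Y ⊆ X a connected subset, and T : X → Y a retraction. Then for every probability measure ν̄ on X and every φ : Y → ℝ one has ‖∇(φ ∘ T)‖²_{ν̄, Q} ≤ ‖∇φ‖²_{T_#ν̄, Q|_{Y×Y}}, where T_#ν̄ denotes the push-forward of ν̄ under T. -/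
open MeasureTheory
open scoped ENNReal

section Aux

variable {Λ : ℝ → ℝ → ℝ}

lemma AdmissibleMean.zero_zero (hΛ : AdmissibleMean Λ) : Λ 0 0 = 0 := by
  have := hΛ.homog 0 1 1 le_rfl zero_le_one zero_le_one
  simpa using this

lemma AdmissibleMean.superadd (hΛ : AdmissibleMean Λ) {s t u v : ℝ}
    (hs : 0 ≤ s) (ht : 0 ≤ t) (hu : 0 ≤ u) (hv : 0 ≤ v) :
    Λ s u + Λ t v ≤ Λ (s + t) (u + v) := by
  have hc := hΛ.concave.2 (show ((s, u) : ℝ × ℝ) ∈ Set.Ici 0 ×ˢ Set.Ici 0 from ⟨hs, hu⟩)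
    (show ((t, v) : ℝ × ℝ) ∈ Set.Ici 0 ×ˢ Set.Ici 0 from ⟨ht, hv⟩)
    (show (0:ℝ) ≤ 1/2 by norm_num) (show (0:ℝ) ≤ 1/2 by norm_num)
    (show (1/2 : ℝ) + 1/2 = 1 by norm_num)
  simp only [Prod.smul_mk, smul_eq_mul, Prod.mk_add_mk] at hc
  have h2 := hΛ.homog 2 (1/2 * s + 1/2 * t) (1/2 * u + 1/2 * v) (by norm_num)
    (by positivity) (by positivity)
  have hst : (2 : ℝ) * (1/2 * s + 1/2 * t) = s + t := by ring
  have huv : (2 : ℝ) * (1/2 * u + 1/2 * v) = u + v := by ring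
  rw [hst, huv] at h2
  rw [h2]
  linarith

lemma AdmissibleMean.mono2 (hΛ : AdmissibleMean Λ) {s s' t t' : ℝ}
    (hs : 0 ≤ s) (hss : s ≤ s') (ht : 0 ≤ t) (htt : t ≤ t') :
    Λ s t ≤ Λ s' t' := by
  calc Λ s t ≤ Λ s' t := hΛ.mono s s' t hs hss ht
  _ = Λ t s' := hΛ.symm _ _
  _ ≤ Λ t' s' := hΛ.mono t t' s' ht htt (hs.trans hss)
  _ = Λ s' t' := hΛ.symm _ _

lemma AdmissibleMean.superadd_sum (hΛ : AdmissibleMean Λ) {ι : Type*} (s : Finset ι)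
    (a b : ι → ℝ) (ha : ∀ i ∈ s, 0 ≤ a i) (hb : ∀ i ∈ s, 0 ≤ b i) :
    ∑ i ∈ s, Λ (a i) (b i) ≤ Λ (∑ i ∈ s, a i) (∑ i ∈ s, b i) := by
  induction s using Finset.cons_induction with
  | empty => simp [hΛ.zero_zero]
  | cons i s hi ih =>
    simp only [Finset.sum_cons]
    have hsa : 0 ≤ ∑ j ∈ s, a j :=
      Finset.sum_nonneg fun j hj => ha j (Finset.mem_cons_of_mem hj)
    have hsb : 0 ≤ ∑ j ∈ s, b j :=
      Finset.sum_nonneg fun j hj => hb j (Finset.mem_cons_of_mem hj)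
    calc Λ (a i) (b i) + ∑ j ∈ s, Λ (a j) (b j)
        ≤ Λ (a i) (b i) + Λ (∑ j ∈ s, a j) (∑ j ∈ s, b j) := by
          exact add_le_add le_rfl (ih (fun j hj => ha j (Finset.mem_cons_of_mem hj))
            (fun j hj => hb j (Finset.mem_cons_of_mem hj)))
      _ ≤ Λ (a i + ∑ j ∈ s, a j) (b i + ∑ j ∈ s, b j) :=
          hΛ.superadd (ha i (Finset.mem_cons_self _ _)) hsa
            (hb i (Finset.mem_cons_self _ _)) hsb

end Aux

/-- **Contraction of the discrete Dirichlet-type energy under a retraction**: for a retraction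
`r` of `X` onto `Y`, every probability measure `ν̄` on `X` and every `φ : Y → ℝ`,
`‖∇(φ ∘ r)‖²_{ν̄, Q} ≤ ‖∇φ‖²_{r_# ν̄, Q|_{Y×Y}}`. -/
theorem gradSq_contraction {X : Type*} [Fintype X] [DecidableEq X]
    (Λ : ℝ → ℝ → ℝ) (Q : X → X → ℝ) (pm : X → ℝ)
    (hMT : IsMarkovTriple Q pm) (hΛ : AdmissibleMean Λ)
    (Y : Set X) [DecidablePred (· ∈ Y)] (hYconn : IsConnectedSubset Q Y)
    (r : X → X) (hr : IsRetraction Q Y r)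
    (ν : X → ℝ) (hν : IsProb ν) (φ : ↥Y → ℝ) :
    gradSq Λ Q ν (fun x => φ ⟨r x, hr.1 x⟩) ≤
      gradSq Λ (fun s s' : ↥Y => Q ↑s ↑s')
        (fun y : ↥Y => ∑ x ∈ Finset.univ.filter (fun x => r x = ↑y), ν x) φ := by
  obtain ⟨hQnn, hQdiag, hirr, hpm, hpmpos, hrev⟩ := hMT
  obtain ⟨hrY, hrid, hR2⟩ := hr
  obtain ⟨hνnn, hνsum⟩ := hν
  set T : X → ↥Y := fun x => ⟨r x, hrY x⟩ with hT
  have hfib : ∀ y : ↥Y, Finset.univ.filter (fun x => r x = (y : X)) =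
      Finset.univ.filter (fun x => T x = y) := by
    intro y
    apply Finset.filter_congr
    intro x _
    simp [hT, Subtype.ext_iff]
  unfold gradSq
  apply mul_le_mul_of_nonneg_left _ (by norm_num : (0:ℝ) ≤ 1/2)
  have key : ∀ y y' : ↥Y,
      (∑ x ∈ Finset.univ.filter (fun x => T x = y),
        ∑ x' ∈ Finset.univ.filter (fun x' => T x' = y'),
          Λ (ν x * Q x x') (ν x' * Q x' x) * (φ (T x') - φ (T x)) ^ 2)
      ≤ Λ ((∑ x ∈ Finset.univ.filter (fun x => T x = y), ν x) * Q ↑y ↑y')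
          ((∑ x ∈ Finset.univ.filter (fun x => T x = y'), ν x) * Q ↑y' ↑y)
          * (φ y' - φ y) ^ 2 := by
    intro y y'
    have hconst : ∀ x ∈ Finset.univ.filter (fun x => T x = y),
        ∀ x' ∈ Finset.univ.filter (fun x' => T x' = y'),
        Λ (ν x * Q x x') (ν x' * Q x' x) * (φ (T x') - φ (T x)) ^ 2
        = Λ (ν x * Q x x') (ν x' * Q x' x) * (φ y' - φ y) ^ 2 := by
      intro x hx x' hx'
      rw [(Finset.mem_filter.1 hx).2, (Finset.mem_filter.1 hx').2]
    rw [Finset.sum_congr rfl fun x hx =>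
      Finset.sum_congr rfl fun x' hx' => hconst x hx x' hx']
    simp only [← Finset.sum_mul]
    rcases eq_or_ne y y' with rfl | hne
    · simp
    · apply mul_le_mul_of_nonneg_right _ (sq_nonneg _)
      have hne' : (y : X) ≠ (y' : X) := fun h => hne (Subtype.ext h)
      rw [← Finset.sum_product']
      calc (∑ p ∈ (Finset.univ.filter (fun x => T x = y)) ×ˢ
              (Finset.univ.filter (fun x' => T x' = y')),
              Λ (ν p.1 * Q p.1 p.2) (ν p.2 * Q p.2 p.1))
          ≤ Λ (∑ p ∈ (Finset.univ.filter (fun x => T x = y)) ×ˢ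
                (Finset.univ.filter (fun x' => T x' = y')), ν p.1 * Q p.1 p.2)
              (∑ p ∈ (Finset.univ.filter (fun x => T x = y)) ×ˢ
                (Finset.univ.filter (fun x' => T x' = y')), ν p.2 * Q p.2 p.1) := by
            apply hΛ.superadd_sum
            · intro p _; exact mul_nonneg (hνnn _) (hQnn _ _)
            · intro p _; exact mul_nonneg (hνnn _) (hQnn _ _)
        _ ≤ Λ ((∑ x ∈ Finset.univ.filter (fun x => T x = y), ν x) * Q ↑y ↑y')
              ((∑ x ∈ Finset.univ.filter (fun x => T x = y'), ν x) * Q ↑y' ↑y) := by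
            apply hΛ.mono2
            · apply Finset.sum_nonneg; intro p _
              exact mul_nonneg (hνnn _) (hQnn _ _)
            · rw [Finset.sum_product]
              simp only [← Finset.mul_sum]
              rw [Finset.sum_mul]
              apply Finset.sum_le_sum
              intro x hx
              apply mul_le_mul_of_nonneg_left _ (hνnn x)
              rw [← hfib y']
              have hrx : r x = ↑y := congrArg Subtype.val (Finset.mem_filter.1 hx).2
              exact hR2 ↑y y.2 ↑y' y'.2 hne' x hrx
            · apply Finset.sum_nonneg; intro p _
              exact mul_nonneg (hνnn _) (hQnn _ _)
            · rw [Finset.sum_product_right]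
              simp only [← Finset.mul_sum]
              rw [Finset.sum_mul]
              apply Finset.sum_le_sum
              intro x' hx'
              apply mul_le_mul_of_nonneg_left _ (hνnn x')
              rw [← hfib y]
              have hrx : r x' = ↑y' := congrArg Subtype.val (Finset.mem_filter.1 hx').2
              exact hR2 ↑y' y'.2 ↑y y.2 (Ne.symm hne') x' hrx
  calc (∑ x, ∑ x', Λ (ν x * Q x x') (ν x' * Q x' x)
          * (φ ⟨r x', hrY x'⟩ - φ ⟨r x, hrY x⟩) ^ 2)
      = ∑ y : ↥Y, ∑ x ∈ Finset.univ.filter (fun x => T x = y),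
          ∑ y' : ↥Y, ∑ x' ∈ Finset.univ.filter (fun x' => T x' = y'),
            Λ (ν x * Q x x') (ν x' * Q x' x) * (φ (T x') - φ (T x)) ^ 2 := by
        rw [Finset.sum_fiberwise_of_maps_to (g := T) (fun x _ => Finset.mem_univ (T x))]
        apply Finset.sum_congr rfl
        intro x _
        rw [Finset.sum_fiberwise_of_maps_to (g := T) (fun x _ => Finset.mem_univ (T x))]
    _ = ∑ y : ↥Y, ∑ y' : ↥Y, ∑ x ∈ Finset.univ.filter (fun x => T x = y),
          ∑ x' ∈ Finset.univ.filter (fun x' => T x' = y'),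
            Λ (ν x * Q x x') (ν x' * Q x' x) * (φ (T x') - φ (T x)) ^ 2 := by
        apply Finset.sum_congr rfl
        intro y _
        rw [Finset.sum_comm]
    _ ≤ ∑ y : ↥Y, ∑ y' : ↥Y,
          Λ ((∑ x ∈ Finset.univ.filter (fun x => T x = y), ν x) * Q ↑y ↑y')
            ((∑ x ∈ Finset.univ.filter (fun x => T x = y'), ν x) * Q ↑y' ↑y)
            * (φ y' - φ y) ^ 2 := by
        apply Finset.sum_le_sum
        intro y _
        apply Finset.sum_le_sum
        intro y' _
        exact key y y'
    _ = ∑ y : ↥Y, ∑ y' : ↥Y,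
          Λ ((∑ x ∈ Finset.univ.filter (fun x => r x = (y : X)), ν x) * Q ↑y ↑y')
            ((∑ x ∈ Finset.univ.filter (fun x => r x = (y' : X)), ν x) * Q ↑y' ↑y)
            * (φ y' - φ y) ^ 2 := by
        apply Finset.sum_congr rfl
        intro y _
        apply Finset.sum_congr rfl
        intro y' _
        rw [hfib y, hfib y']
end

section
/- Retraction property on the cycle: for n ≥ 3, let X = ℤ/nℤ with rates Q(j, j+1) = Q(j+1, j) = 1 (indices mod n) and Q(i,j) = 0 otherwise. For 1 ≤ k < n, the subset Y = {1, …, k} has the retraction property if and only if 2k ≤ n. In the case 2k ≤ n, the map T : X → Y given by T(j) = j for 1 ≤ j ≤ k, T(j) = 2k − j + 1 for k+1 ≤ j ≤ 2k, and T(j) = 1 for 2k+1 ≤ j ≤ n, is a retraction. -/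
open MeasureTheory
open scoped ENNReal

/-- Nearest-neighbour rates on the cycle `ℤ/nℤ`. -/
noncomputable def cycleQ (n : ℕ) : ZMod n → ZMod n → ℝ :=
  fun i j => if j = i + 1 ∨ i = j + 1 then 1 else 0

/-- The subset `{1, …, k}` of the cycle. -/
def cycleY (n k : ℕ) : Set (ZMod n) :=
  {x | ∃ j : ℕ, 1 ≤ j ∧ j ≤ k ∧ x = (j : ZMod n)}

/-- The candidate retraction of the cycle onto `{1, …, k}`: `T(j) = j` for `1 ≤ j ≤ k`,
`T(j) = 2k − j + 1` for `k + 1 ≤ j ≤ 2k`, and `T(j) = 1` for `2k + 1 ≤ j ≤ n`. -/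
def cycleT (n k : ℕ) : ZMod n → ZMod n := fun x =>
  if 1 ≤ x.val ∧ x.val ≤ k then x
  else if k + 1 ≤ x.val ∧ x.val ≤ 2 * k then ((2 * k - x.val + 1 : ℕ) : ZMod n)
  else 1

namespace CycleAux

def tv (k v : ℕ) : ℕ :=
  if 1 ≤ v ∧ v ≤ k then v else if k + 1 ≤ v ∧ v ≤ 2 * k then 2 * k - v + 1 else 1

lemma tv_mem {k : ℕ} (hk : 1 ≤ k) (v : ℕ) : 1 ≤ tv k v ∧ tv k v ≤ k := by
  unfold tv; split_ifs <;> omega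

-- ZMod basics
lemma cast_inj_of_lt {n a b : ℕ} (ha : a < n) (hb : b < n) (h : (a : ZMod n) = b) : a = b := by
  have := congrArg ZMod.val h
  rwa [ZMod.val_natCast_of_lt ha, ZMod.val_natCast_of_lt hb] at this

lemma cycleQ_nonneg {n : ℕ} (a b : ZMod n) : 0 ≤ cycleQ n a b := by
  unfold cycleQ; split_ifs <;> norm_num

lemma cycleQ_le_one {n : ℕ} (a b : ZMod n) : cycleQ n a b ≤ 1 := by
  unfold cycleQ; split_ifs <;> norm_num

lemma cycleQ_eq_one_right {n : ℕ} {a b : ZMod n} (h : b = a + 1) : cycleQ n a b = 1 := by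
  unfold cycleQ; rw [if_pos (Or.inl h)]

lemma cycleQ_eq_one_left {n : ℕ} {a b : ZMod n} (h : a = b + 1) : cycleQ n a b = 1 := by
  unfold cycleQ; rw [if_pos (Or.inr h)]

lemma cycleQ_symm {n : ℕ} (a b : ZMod n) : cycleQ n a b = cycleQ n b a := by
  unfold cycleQ
  simp only [or_comm]

lemma cycleQ_cases {n : ℕ} {a b : ZMod n} (h : cycleQ n a b ≠ 0) : b = a + 1 ∨ a = b + 1 := by
  by_contra hc
  push_neg at hc
  exact h (by unfold cycleQ; rw [if_neg (by tauto)])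

lemma mem_cycleY {n k : ℕ} [NeZero n] (hkn : k < n) {x : ZMod n} :
    x ∈ cycleY n k ↔ 1 ≤ x.val ∧ x.val ≤ k := by
  constructor
  · rintro ⟨j, h1, h2, rfl⟩
    rw [ZMod.val_natCast_of_lt (by omega)]
    exact ⟨h1, h2⟩
  · rintro ⟨h1, h2⟩
    exact ⟨x.val, h1, h2, (ZMod.natCast_zmod_val x).symm⟩

lemma val_add_one' {n : ℕ} [NeZero n] (hn : 3 ≤ n) (x : ZMod n) :
    (x + 1).val = (x.val + 1) % n := by
  rw [ZMod.val_add, ZMod.val_one'' (by omega)]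

lemma val_sub_one' {n : ℕ} [NeZero n] (hn : 3 ≤ n) (x : ZMod n) :
    (x - 1).val = (x.val + (n - 1)) % n := by
  have h1 : (x - 1 : ZMod n) = x + ((n - 1 : ℕ) : ZMod n) := by
    have h2 : ((n - 1 : ℕ) : ZMod n) = (n : ZMod n) - 1 := by
      rw [Nat.cast_sub (by omega : 1 ≤ n), Nat.cast_one]
    rw [h2, ZMod.natCast_self]; ring
  rw [h1, ZMod.val_add, ZMod.val_natCast_of_lt (by omega)]

lemma val_succ_of_mem {n k : ℕ} [NeZero n] (hn : 3 ≤ n) (hkn : k < n) {a b : ZMod n}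
    (ha1 : 1 ≤ a.val) (hak : a.val ≤ k) (hb1 : 1 ≤ b.val) (hbk : b.val ≤ k)
    (h : b = a + 1) : b.val = a.val + 1 := by
  have hb : b.val = (a.val + 1) % n := by rw [h, val_add_one' hn]
  have halt : a.val < n := a.val_lt
  by_cases hc : a.val + 1 = n
  · rw [hc, Nat.mod_self] at hb; omega
  · rw [Nat.mod_eq_of_lt (by omega)] at hb; omega

lemma ne_add_sub {n : ℕ} [NeZero n] (hn : 3 ≤ n) (x : ZMod n) : x + 1 ≠ x - 1 := by
  intro h
  have h2 : ((2 : ℕ) : ZMod n) = 0 := by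
    push_cast
    linear_combination h
  have h3 : ((2 : ℕ) : ZMod n) = ((0 : ℕ) : ZMod n) := by rw [h2, Nat.cast_zero]
  have := cast_inj_of_lt (by omega) (by omega) h3
  omega

lemma sum_Q {n : ℕ} [NeZero n] (hn : 3 ≤ n) (x : ZMod n) (S : Finset (ZMod n)) :
    ∑ x' ∈ S, cycleQ n x x' =
      (if x + 1 ∈ S then (1:ℝ) else 0) + (if x - 1 ∈ S then 1 else 0) := by
  have h2 := ne_add_sub hn x
  have hQ : ∀ x' : ZMod n, cycleQ n x x' =
      (if x' = x + 1 then (1:ℝ) else 0) + (if x' = x - 1 then 1 else 0) := by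
    intro x'
    rcases em (x' = x + 1) with ha | ha
    · rw [if_pos ha, if_neg (by rw [ha]; exact h2), add_zero,
        cycleQ_eq_one_right ha]
    · rcases em (x' = x - 1) with hb | hb
      · rw [if_neg ha, if_pos hb, zero_add, cycleQ_eq_one_left (by rw [hb]; ring)]
      · rw [if_neg ha, if_neg hb, add_zero]
        unfold cycleQ
        rw [if_neg]
        rintro (h | h)
        · exact ha h
        · exact hb (by rw [h]; ring)
  simp_rw [hQ]
  rw [Finset.sum_add_distrib, Finset.sum_ite_eq' S (x + 1) (fun _ => (1:ℝ)),
    Finset.sum_ite_eq' S (x - 1) (fun _ => (1:ℝ))]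

lemma cycleT_eq_cast {n k : ℕ} [NeZero n] (x : ZMod n) :
    cycleT n k x = ((tv k x.val : ℕ) : ZMod n) := by
  unfold cycleT tv
  split_ifs
  · exact (ZMod.natCast_zmod_val x).symm
  · rfl
  · exact Nat.cast_one.symm

lemma cycleT_val {n k : ℕ} [NeZero n] (hk : 1 ≤ k) (hkn : k < n) (x : ZMod n) :
    (cycleT n k x).val = tv k x.val := by
  rw [cycleT_eq_cast]
  exact ZMod.val_natCast_of_lt (by have := tv_mem hk x.val; omega)

lemma tvA {n k v : ℕ} (hk : 1 ≤ k) (h2k : 2 * k ≤ n) (hv : v < n) :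
    tv k ((v + 1) % n) = tv k v ∨ tv k ((v + 1) % n) = tv k v + 1 ∨
      tv k v = tv k ((v + 1) % n) + 1 := by
  have hs : (v + 1) % n = if v + 1 = n then 0 else v + 1 := by
    split_ifs with h
    · simp [h]
    · exact Nat.mod_eq_of_lt (by omega)
  rw [hs]; unfold tv; split_ifs <;> omega

set_option maxHeartbeats 1600000 in
lemma tvB {n k v : ℕ} (hn : 3 ≤ n) (hk : 1 ≤ k) (h2k : 2 * k ≤ n) (hv : v < n)
    (h : tv k ((v + 1) % n) = tv k ((v + (n - 1)) % n)) :
    tv k ((v + 1) % n) = tv k v := by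
  by_cases hv0 : v = 0
  · subst hv0
    have hs : (0 + 1) % n = 1 := Nat.mod_eq_of_lt (by omega)
    have hp : (0 + (n - 1)) % n = n - 1 := by
      rw [Nat.zero_add]; exact Nat.mod_eq_of_lt (by omega)
    rw [hs, hp] at h; rw [hs]
    unfold tv at h ⊢; split_ifs at h ⊢ <;> omega
  · by_cases hvn : v + 1 = n
    · have hs : (v + 1) % n = 0 := by rw [hvn, Nat.mod_self]
      have hp : (v + (n - 1)) % n = v - 1 := by
        have : v + (n - 1) = (v - 1) + n := by omega
        rw [this, Nat.add_mod_right]; exact Nat.mod_eq_of_lt (by omega)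
      rw [hs, hp] at h; rw [hs]
      unfold tv at h ⊢; split_ifs at h ⊢ <;> omega
    · have hs : (v + 1) % n = v + 1 := Nat.mod_eq_of_lt (by omega)
      have hp : (v + (n - 1)) % n = v - 1 := by
        have : v + (n - 1) = (v - 1) + n := by omega
        rw [this, Nat.add_mod_right]; exact Nat.mod_eq_of_lt (by omega)
      rw [hs, hp] at h; rw [hs]
      unfold tv at h ⊢; split_ifs at h ⊢ <;> omega

lemma cycleT_step {n k : ℕ} [NeZero n] (hn : 3 ≤ n) (hk : 1 ≤ k) (h2k : 2 * k ≤ n)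
    (x : ZMod n) :
    cycleT n k (x + 1) = cycleT n k x ∨
      cycleQ n (cycleT n k x) (cycleT n k (x + 1)) = 1 := by
  have hkn : k < n := by omega
  have hA := tvA (n := n) (k := k) (v := x.val) hk h2k x.val_lt
  rw [← val_add_one' hn x] at hA
  rcases hA with h | h | h
  · left
    rw [cycleT_eq_cast (x + 1), cycleT_eq_cast x, h]
  · right
    refine cycleQ_eq_one_right ?_
    rw [cycleT_eq_cast (x + 1), cycleT_eq_cast x, h]
    push_cast; ring
  · right
    refine cycleQ_eq_one_left ?_
    rw [cycleT_eq_cast (x + 1), cycleT_eq_cast x, h]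
    push_cast; ring

lemma cycleT_fold {n k : ℕ} [NeZero n] (hn : 3 ≤ n) (hk : 1 ≤ k) (h2k : 2 * k ≤ n)
    (x : ZMod n) (h : cycleT n k (x + 1) = cycleT n k (x - 1)) :
    cycleT n k (x + 1) = cycleT n k x := by
  have hkn : k < n := by omega
  have hval : tv k ((x.val + 1) % n) = tv k ((x.val + (n - 1)) % n) := by
    have h2 := congrArg ZMod.val h
    rwa [cycleT_val hk hkn, cycleT_val hk hkn, val_add_one' hn, val_sub_one' hn] at h2
  have h3 := tvB hn hk h2k x.val_lt hval
  rw [cycleT_eq_cast (x + 1), cycleT_eq_cast x, val_add_one' hn, h3]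

end CycleAux
/-- **Retraction property on the cycle** (Example 4.5): for `n ≥ 3` and `1 ≤ k < n`, the
subset `{1, …, k}` of the `n`-cycle has the retraction property if and only if `2k ≤ n`;
in that case the explicit folding map `cycleT` is a retraction. -/
theorem cycle_retraction (n k : ℕ) [NeZero n] (hn : 3 ≤ n) (hk : 1 ≤ k) (hkn : k < n) :
    (HasRetractionProperty (cycleQ n) (cycleY n k) ↔ 2 * k ≤ n) ∧
    (2 * k ≤ n → IsRetraction (cycleQ n) (cycleY n k) (cycleT n k)) := by
  classical
  have hn1 : n ≠ 1 := by omega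
  have part2 : 2 * k ≤ n → IsRetraction (cycleQ n) (cycleY n k) (cycleT n k) := by
    intro h2k
    refine ⟨fun x => ?_, fun y hy => ?_, fun y hy y' hy' hne x hx => ?_⟩
    · rw [CycleAux.mem_cycleY hkn, CycleAux.cycleT_val hk hkn]
      exact CycleAux.tv_mem hk x.val
    · rw [CycleAux.mem_cycleY hkn] at hy
      unfold cycleT
      rw [if_pos hy]
    · rw [CycleAux.sum_Q hn x]
      simp only [Finset.mem_filter, Finset.mem_univ, true_and]
      by_cases h1 : cycleT n k (x + 1) = y' <;> by_cases h2 : cycleT n k (x - 1) = y'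
      · exact absurd (hx.symm.trans
          ((CycleAux.cycleT_fold hn hk h2k x (h1.trans h2.symm)).symm.trans h1)) hne
      · rw [if_pos h1, if_neg h2, add_zero]
        rcases CycleAux.cycleT_step hn hk h2k x with hs | hs
        · exact absurd (hx.symm.trans (hs.symm.trans h1)) hne
        · rw [hx, h1] at hs
          exact le_of_eq hs.symm
      · rw [if_neg h1, if_pos h2, zero_add]
        have hx1 : x - 1 + 1 = x := by ring
        rcases CycleAux.cycleT_step hn hk h2k (x - 1) with hs | hs
        · rw [hx1] at hs
          exact absurd (hx.symm.trans (hs.trans h2)) hne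
        · rw [hx1, hx, h2] at hs
          rw [CycleAux.cycleQ_symm]
          exact le_of_eq hs.symm
      · rw [if_neg h1, if_neg h2]
        have := CycleAux.cycleQ_nonneg y y'
        linarith
  have hconn : IsConnectedSubset (cycleQ n) (cycleY n k) := by
    intro y hy y' hy'
    have up : ∀ j : ℕ, 1 ≤ j → j ≤ k →
        Relation.ReflTransGen (fun a b => b ∈ cycleY n k ∧ 0 < cycleQ n a b)
          ((1 : ℕ) : ZMod n) ((j : ℕ) : ZMod n) := by
      intro j h1 h2
      induction j, h1 using Nat.le_induction with
      | base => exact Relation.ReflTransGen.refl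
      | succ m hm ih =>
        refine Relation.ReflTransGen.tail (ih (by omega)) ?_
        refine ⟨⟨m + 1, by omega, h2, rfl⟩, ?_⟩
        rw [show ((m + 1 : ℕ) : ZMod n) = ((m : ℕ) : ZMod n) + 1 by push_cast; ring,
          CycleAux.cycleQ_eq_one_right rfl]
        norm_num
    have down : ∀ j : ℕ, 1 ≤ j → j ≤ k →
        Relation.ReflTransGen (fun a b => b ∈ cycleY n k ∧ 0 < cycleQ n a b)
          ((j : ℕ) : ZMod n) ((1 : ℕ) : ZMod n) := by
      intro j h1 h2
      induction j, h1 using Nat.le_induction with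
      | base => exact Relation.ReflTransGen.refl
      | succ m hm ih =>
        refine Relation.ReflTransGen.head ?_ (ih (by omega))
        refine ⟨⟨m, hm, by omega, rfl⟩, ?_⟩
        rw [show ((m + 1 : ℕ) : ZMod n) = ((m : ℕ) : ZMod n) + 1 by push_cast; ring,
          CycleAux.cycleQ_eq_one_left rfl]
        norm_num
    obtain ⟨j, h1, h2, rfl⟩ := hy
    obtain ⟨j', h1', h2', rfl⟩ := hy'
    exact (down j h1 h2).trans (up j' h1' h2')
  have part1 : HasRetractionProperty (cycleQ n) (cycleY n k) → 2 * k ≤ n := by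
    rintro ⟨-, T, hTY, hTid, hTR⟩
    rcases Nat.lt_or_ge k 2 with hk2 | hk2
    · omega
    have hvT : ∀ x : ZMod n, 1 ≤ (T x).val ∧ (T x).val ≤ k :=
      fun x => (CycleAux.mem_cycleY hkn).1 (hTY x)
    -- the two structural consequences of the retraction inequality
    have S1 : ∀ x : ZMod n, T (x + 1) = T x ∨
        (T (x + 1) = T x + 1 ∨ T x = T (x + 1) + 1) := by
      intro x
      by_cases h : T (x + 1) = T x
      · exact Or.inl h
      · right
        have hsum := hTR (T x) (hTY x) (T (x + 1)) (hTY (x + 1)) (Ne.symm h) x rfl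
        have hmem : (x + 1) ∈ Finset.univ.filter (fun x' => T x' = T (x + 1)) := by simp
        have hone : (1 : ℝ) ≤ ∑ x' ∈ Finset.univ.filter (fun x' => T x' = T (x + 1)),
            cycleQ n x x' := by
          have hle : cycleQ n x (x + 1) ≤ ∑ x' ∈ Finset.univ.filter
              (fun x' => T x' = T (x + 1)), cycleQ n x x' :=
            Finset.single_le_sum (f := fun x' => cycleQ n x x')
              (fun i _ => CycleAux.cycleQ_nonneg x i) hmem
          rwa [CycleAux.cycleQ_eq_one_right rfl] at hle
        have hQ1 : cycleQ n (T x) (T (x + 1)) = 1 :=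
          le_antisymm (CycleAux.cycleQ_le_one _ _) (le_trans hone hsum)
        exact CycleAux.cycleQ_cases (by rw [hQ1]; norm_num)
    have S2 : ∀ x : ZMod n, T (x + 1) = T (x - 1) → T (x + 1) = T x := by
      intro x h
      by_contra hne
      have hsum := hTR (T x) (hTY x) (T (x + 1)) (hTY (x + 1))
        (fun e => hne e.symm) x rfl
      have hsub : ({x + 1, x - 1} : Finset (ZMod n)) ⊆
          Finset.univ.filter (fun x' => T x' = T (x + 1)) := by
        intro z hz
        simp only [Finset.mem_insert, Finset.mem_singleton] at hz
        simp only [Finset.mem_filter, Finset.mem_univ, true_and]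
        rcases hz with rfl | rfl
        · rfl
        · exact h.symm
      have hpair : ∑ x' ∈ ({x + 1, x - 1} : Finset (ZMod n)), cycleQ n x x' = 2 := by
        rw [Finset.sum_pair (CycleAux.ne_add_sub hn x),
          CycleAux.cycleQ_eq_one_right rfl, CycleAux.cycleQ_eq_one_left (by ring)]
        norm_num
      have h2 : (2 : ℝ) ≤ ∑ x' ∈ Finset.univ.filter (fun x' => T x' = T (x + 1)),
          cycleQ n x x' := by
        rw [← hpair]
        exact Finset.sum_le_sum_of_subset_of_nonneg hsub
          (fun i _ _ => CycleAux.cycleQ_nonneg x i)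
      have := CycleAux.cycleQ_le_one (T x) (T (x + 1))
      linarith
    have hTid' : ∀ j : ℕ, 1 ≤ j → j ≤ k → T ((j : ℕ) : ZMod n) = ((j : ℕ) : ZMod n) :=
      fun j h1 h2 => hTid _ ⟨j, h1, h2, rfl⟩
    -- value of T just past the top of Y
    have htop : T ((k : ZMod n) + 1) = (k : ZMod n) := by
      rcases S1 ((k : ℕ) : ZMod n) with h | h | h
      · rw [h, hTid' k hk le_rfl]
      · exfalso
        rw [hTid' k hk le_rfl] at h
        have hb := hvT (((k : ℕ) : ZMod n) + 1)
        rw [h] at hb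
        rw [CycleAux.val_add_one' hn, ZMod.val_natCast_of_lt hkn] at hb
        by_cases hc : k + 1 = n
        · rw [hc, Nat.mod_self] at hb; omega
        · rw [Nat.mod_eq_of_lt (by omega)] at hb; omega
      · rw [hTid' k hk le_rfl] at h
        have he : T (((k : ℕ) : ZMod n) + 1) = ((k - 1 : ℕ) : ZMod n) := by
          rw [Nat.cast_sub hk, Nat.cast_one]
          exact eq_sub_of_add_eq h.symm
        have hm1 : ((k : ℕ) : ZMod n) - 1 = ((k - 1 : ℕ) : ZMod n) := by
          rw [Nat.cast_sub hk, Nat.cast_one]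
        have hfold := S2 ((k : ℕ) : ZMod n) (by
          rw [he, hm1, hTid' (k - 1) (by omega) (by omega)])
        rw [he, hTid' k hk le_rfl] at hfold
        have := CycleAux.cast_inj_of_lt (by omega) hkn hfold
        omega
    -- value of T just past the bottom of Y
    have h1Y : T ((1 : ℕ) : ZMod n) = ((1 : ℕ) : ZMod n) := hTid' 1 le_rfl hk
    have e01 : (0 : ZMod n) + 1 = ((1 : ℕ) : ZMod n) := by push_cast; ring
    have e12 : ((1 : ℕ) : ZMod n) + 1 = ((2 : ℕ) : ZMod n) := by push_cast; ring
    have hbot : T (0 : ZMod n) = ((1 : ℕ) : ZMod n) := by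
      rcases S1 (0 : ZMod n) with h | h | h
      · rw [e01, h1Y] at h
        exact h.symm
      · exfalso
        rw [e01, h1Y] at h
        have hT0 : T 0 = 0 := by
          have h' : T 0 + 1 = 0 + 1 := by rw [← h, e01]
          exact add_right_cancel h'
        have hb := hvT 0
        rw [hT0, ZMod.val_zero] at hb
        omega
      · exfalso
        rw [e01, h1Y] at h
        have h2 : T 0 = ((2 : ℕ) : ZMod n) := by rw [h]; push_cast; ring
        have hfold := S2 ((1 : ℕ) : ZMod n) (by
          rw [e12, show ((1 : ℕ) : ZMod n) - 1 = (0 : ZMod n) by push_cast; ring,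
            hTid' 2 (by omega) hk2, h2])
        rw [e12, hTid' 2 (by omega) hk2, h1Y] at hfold
        have := CycleAux.cast_inj_of_lt (by omega) (by omega) hfold
        omega
    -- walk around the complement
    have hstepF : ∀ v : ℕ, (T ((v : ℕ) : ZMod n)).val ≤ (T ((v + 1 : ℕ) : ZMod n)).val + 1 := by
      intro v
      have e : ((v + 1 : ℕ) : ZMod n) = ((v : ℕ) : ZMod n) + 1 := by push_cast; ring
      rw [e]
      rcases S1 ((v : ℕ) : ZMod n) with h | h | h
      · rw [h]; omega
      · have := CycleAux.val_succ_of_mem hn hkn (hvT _).1 (hvT _).2 (hvT _).1 (hvT _).2 h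
        omega
      · have := CycleAux.val_succ_of_mem hn hkn (hvT _).1 (hvT _).2 (hvT _).1 (hvT _).2 h
        omega
    have hchain : ∀ i : ℕ,
        (T ((k + 1 : ℕ) : ZMod n)).val ≤ (T ((k + 1 + i : ℕ) : ZMod n)).val + i := by
      intro i
      induction i with
      | zero => simp
      | succ m ih =>
        have hs := hstepF (k + 1 + m)
        have e : k + 1 + (m + 1) = k + 1 + m + 1 := by ring
        rw [e]
        omega
    have hFtop : (T ((k + 1 : ℕ) : ZMod n)).val = k := by
      rw [show ((k + 1 : ℕ) : ZMod n) = ((k : ℕ) : ZMod n) + 1 by push_cast; ring, htop,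
        ZMod.val_natCast_of_lt hkn]
    have hFbot : (T ((n : ℕ) : ZMod n)).val = 1 := by
      rw [ZMod.natCast_self, hbot, ZMod.val_natCast_of_lt (by omega)]
    have hfin := hchain (n - (k + 1))
    rw [show k + 1 + (n - (k + 1)) = n by omega, hFbot, hFtop] at hfin
    omega
  exact ⟨⟨part1, fun h2k => ⟨hconn, cycleT n k, part2 h2k⟩⟩, part2⟩
end

section
/- Retraction property of hyperrectangles in the grid: equip a finite connected subset X of ℤ^d with the rates Q(x,y) = 1 if |x − y| = 1 (Euclidean distance) and Q(x,y) = 0 otherwise. Let Y = R ∩ ℤ^d be nonempty with Y ⊆ X, where R = ∏_{j=1}^d [a_j, b_j] is a hyperrectangle with integer endpoints a_j ≤ b_j. Then Y has the retraction property as a subset of X; a retraction is given by mapping each x ∈ X to the (unique) point of Y closest to x in Euclidean distance, namely the coordinatewise clamp of x to [a_j, b_j]. -/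
open MeasureTheory
open scoped ENNReal

/-- Nearest-neighbour rates on a subset `X` of the grid `ℤ^d`: rate `1` between points at
Euclidean distance `1`, rate `0` otherwise. -/
noncomputable def gridQ (d : ℕ) (X : Set (Fin d → ℤ)) : ↥X → ↥X → ℝ :=
  fun u v => if (∑ j, ((u : Fin d → ℤ) j - (v : Fin d → ℤ) j) ^ 2) = 1 then 1 else 0

/-- The set of grid points of `X` lying in the hyperrectangle `∏ⱼ [aⱼ, bⱼ]`. -/
def gridY (d : ℕ) (X : Set (Fin d → ℤ)) (a b : Fin d → ℤ) : Set ↥X :=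
  {u | ∀ j, a j ≤ (u : Fin d → ℤ) j ∧ (u : Fin d → ℤ) j ≤ b j}

lemma my_sum_sq_eq_one {d : ℕ} (u v : Fin d → ℤ)
    (h : ∑ j, (u j - v j) ^ 2 = 1) :
    ∃ j, (u j - v j) ^ 2 = 1 ∧ ∀ k, k ≠ j → u k = v k := by
  have hnn : ∀ j, 0 ≤ (u j - v j) ^ 2 := fun j => sq_nonneg _
  have hex : ∃ j, (u j - v j) ^ 2 ≠ 0 := by
    by_contra hc
    push_neg at hc
    rw [Finset.sum_eq_zero (fun j _ => hc j)] at h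
    exact one_ne_zero h.symm
  obtain ⟨j, hj⟩ := hex
  have hj1 : 1 ≤ (u j - v j) ^ 2 := lt_of_le_of_ne (hnn j) (Ne.symm hj)
  have hsplit : (u j - v j) ^ 2 + ∑ k ∈ Finset.univ.erase j, (u k - v k) ^ 2 = 1 := by
    rw [Finset.add_sum_erase Finset.univ (fun k => (u k - v k) ^ 2) (Finset.mem_univ j)]
    exact h
  have hrest : ∑ k ∈ Finset.univ.erase j, (u k - v k) ^ 2 = 0 := by
    have : 0 ≤ ∑ k ∈ Finset.univ.erase j, (u k - v k) ^ 2 :=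
      Finset.sum_nonneg (fun k _ => hnn k)
    omega
  refine ⟨j, by omega, fun k hk => ?_⟩
  have := (Finset.sum_eq_zero_iff_of_nonneg (fun k _ => hnn k)).mp hrest k
    (Finset.mem_erase.mpr ⟨hk, Finset.mem_univ k⟩)
  have := pow_eq_zero_iff (n := 2) (by norm_num) |>.mp this
  omega

lemma my_sq_eq_one {c : ℤ} (h : c ^ 2 = 1) : c = 1 ∨ c = -1 := by
  have : (c - 1) * (c + 1) = 0 := by ring_nf; linarith
  rcases mul_eq_zero.mp this with h | h <;> omega

lemma my_one_sq {c : ℤ} (h : c = 1 ∨ c = -1) : c ^ 2 = 1 := by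
  rcases h with h | h <;> rw [h] <;> norm_num

lemma my_sum_sq_one_of {d : ℕ} (u v : Fin d → ℤ) (j : Fin d)
    (h1 : (u j - v j) ^ 2 = 1) (h2 : ∀ k, k ≠ j → u k = v k) :
    ∑ k, (u k - v k) ^ 2 = 1 := by
  rw [Finset.sum_eq_single_of_mem j (Finset.mem_univ j)
    (fun k _ hk => by rw [h2 k hk]; ring)]
  exact h1

lemma gridQ_nonneg {d : ℕ} {X : Set (Fin d → ℤ)} (u v : ↥X) : 0 ≤ gridQ d X u v := by
  simp only [gridQ]; split <;> norm_num

lemma grid_retraction_of_clamp (d : ℕ) (X : Set (Fin d → ℤ)) [Fintype ↥X]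
    (a b : Fin d → ℤ) (hab : ∀ j, a j ≤ b j)
    (T : ↥X → ↥X)
    (hT : ∀ (u : ↥X) (j : Fin d),
      (T u : Fin d → ℤ) j = max (a j) (min (b j) ((u : Fin d → ℤ) j))) :
    IsRetraction (gridQ d X) (gridY d X a b) T := by
  have hcl : ∀ (u v : ↥X), T u = v →
      ∀ k, (v : Fin d → ℤ) k = max (a k) (min (b k) ((u : Fin d → ℤ) k)) := by
    intro u v huv k
    rw [← huv]; exact hT u k
  refine ⟨?_, ?_, ?_⟩
  · intro u j
    rw [hT]
    have := hab j
    constructor <;> omega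
  · intro y hy
    apply Subtype.ext
    funext j
    rw [hT]
    have := hy j
    omega
  · intro y hy y' hy' hne x hx
    -- core claim
    have key : ∀ w : ↥X, T w = y' →
        (∑ j, ((x : Fin d → ℤ) j - (w : Fin d → ℤ) j) ^ 2) = 1 →
        ∃ j0, ((x : Fin d → ℤ) j0 - (w : Fin d → ℤ) j0) ^ 2 = 1 ∧
          (∀ k, k ≠ j0 → (x : Fin d → ℤ) k = (w : Fin d → ℤ) k) ∧
          (∀ k, k ≠ j0 → (y' : Fin d → ℤ) k = (y : Fin d → ℤ) k) ∧
          (y' : Fin d → ℤ) j0 ≠ (y : Fin d → ℤ) j0 := by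
      intro w hw hdist
      obtain ⟨j0, h1, h2⟩ := my_sum_sq_eq_one _ _ hdist
      have hyk := hcl x y hx
      have hy'k := hcl w y' hw
      have heq : ∀ k, k ≠ j0 → (y' : Fin d → ℤ) k = (y : Fin d → ℤ) k := by
        intro k hk
        rw [hy'k k, hyk k, ← h2 k hk]
      refine ⟨j0, h1, h2, heq, fun hcon => ?_⟩
      apply hne
      apply Subtype.ext
      funext k
      by_cases hk : k = j0
      · rw [hk, hcon]
      · exact (heq k hk).symm
    have hsum : ∑ x' ∈ Finset.univ.filter (fun x' => T x' = y'), gridQ d X x x'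
        = (((Finset.univ.filter (fun x' => T x' = y')).filter
            (fun x' : ↥X => (∑ j, ((x : Fin d → ℤ) j - (x' : Fin d → ℤ) j) ^ 2) = 1)).card : ℝ) := by
      rw [← Finset.sum_boole]
      rfl
    rw [hsum]
    rcases Finset.eq_empty_or_nonempty
      ((Finset.univ.filter (fun x' => T x' = y')).filter
        (fun x' : ↥X => (∑ j, ((x : Fin d → ℤ) j - (x' : Fin d → ℤ) j) ^ 2) = 1)) with he | ⟨w, hwmem⟩
    · rw [he]
      simpa using gridQ_nonneg y y'
    · have hw := Finset.mem_filter.mp hwmem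
      have hwT : T w = y' := (Finset.mem_filter.mp hw.1).2
      have hwd : (∑ j, ((x : Fin d → ℤ) j - (w : Fin d → ℤ) j) ^ 2) = 1 := hw.2
      obtain ⟨j0, h1, h2, heq, hneq⟩ := key w hwT hwd
      -- Q y y' = 1
      have hQ1 : gridQ d X y y' = 1 := by
        have hyj := hcl x y hx j0
        have hy'j := hcl w y' hwT j0
        have hd := my_sq_eq_one h1
        have : ((y : Fin d → ℤ) j0 - (y' : Fin d → ℤ) j0) ^ 2 = 1 := by
          apply my_one_sq
          omega
        have hs : (∑ k, ((y : Fin d → ℤ) k - (y' : Fin d → ℤ) k) ^ 2) = 1 :=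
          my_sum_sq_one_of _ _ j0 this (fun k hk => by rw [heq k hk])
        simp only [gridQ, hs, if_pos]
      rw [hQ1]
      have hcard : (((Finset.univ.filter (fun x' => T x' = y')).filter
          (fun x' : ↥X => (∑ j, ((x : Fin d → ℤ) j - (x' : Fin d → ℤ) j) ^ 2) = 1)).card) ≤ 1 := by
        apply Finset.card_le_one.mpr
        intro w1 hw1 w2 hw2
        have hw1' := Finset.mem_filter.mp hw1
        have hw2' := Finset.mem_filter.mp hw2
        have hw1T : T w1 = y' := (Finset.mem_filter.mp hw1'.1).2
        have hw2T : T w2 = y' := (Finset.mem_filter.mp hw2'.1).2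
        obtain ⟨j1, p1, q1, r1, s1⟩ := key w1 hw1T hw1'.2
        obtain ⟨j2, p2, q2, r2, s2⟩ := key w2 hw2T hw2'.2
        have hj12 : j1 = j2 := by
          by_contra hc
          exact s1 (r2 j1 hc)
        subst hj12
        apply Subtype.ext
        funext k
        by_cases hk : k = j1
        · subst hk
          have hyj := hcl x y hx k
          have hy1 := hcl w1 y' hw1T k
          have hy2 := hcl w2 y' hw2T k
          have d1 := my_sq_eq_one p1
          have d2 := my_sq_eq_one p2
          omega
        · rw [← q1 k hk, ← q2 k hk]
      exact_mod_cast hcard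

lemma grid_conn (d : ℕ) (X : Set (Fin d → ℤ)) (a b : Fin d → ℤ)
    (hYX : ∀ z : Fin d → ℤ, (∀ j, a j ≤ z j ∧ z j ≤ b j) → z ∈ X) :
    ∀ n : ℕ, ∀ y y' : ↥X, y ∈ gridY d X a b → y' ∈ gridY d X a b →
      (∑ j, ((y : Fin d → ℤ) j - (y' : Fin d → ℤ) j).natAbs) = n →
      Relation.ReflTransGen (fun p q => q ∈ gridY d X a b ∧ 0 < gridQ d X p q) y y' := by
  intro n
  induction n with
  | zero =>
    intro y y' hy hy' h
    have : y = y' := by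
      apply Subtype.ext
      funext j
      have := Finset.sum_eq_zero_iff.mp h j (Finset.mem_univ j)
      omega
    rw [this]
  | succ n ih =>
    intro y y' hy hy' h
    have hex : ∃ j, (y : Fin d → ℤ) j ≠ (y' : Fin d → ℤ) j := by
      by_contra hc
      push_neg at hc
      rw [Finset.sum_eq_zero (fun j _ => by rw [hc j]; simp)] at h
      omega
    obtain ⟨j, hj⟩ := hex
    obtain ⟨s, hs⟩ : ∃ s : ℤ, (s = 1 ∧ (y : Fin d → ℤ) j < (y' : Fin d → ℤ) j) ∨
        (s = -1 ∧ (y' : Fin d → ℤ) j < (y : Fin d → ℤ) j) := by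
      rcases lt_or_gt_of_ne hj with h' | h'
      · exact ⟨1, Or.inl ⟨rfl, h'⟩⟩
      · exact ⟨-1, Or.inr ⟨rfl, h'⟩⟩
    set zf : Fin d → ℤ := Function.update (y : Fin d → ℤ) j ((y : Fin d → ℤ) j + s) with hzf
    have hzj : zf j = (y : Fin d → ℤ) j + s := Function.update_self _ _ _
    have hzk : ∀ k, k ≠ j → zf k = (y : Fin d → ℤ) k := fun k hk =>
      Function.update_of_ne hk _ _
    have hzrect : ∀ k, a k ≤ zf k ∧ zf k ≤ b k := by
      intro k
      by_cases hk : k = j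
      · subst hk
        rw [hzj]
        have := hy k
        have := hy' k
        omega
      · rw [hzk k hk]
        exact hy k
    have hzX := hYX zf hzrect
    set z : ↥X := ⟨zf, hzX⟩ with hz
    have hzc : (z : Fin d → ℤ) = zf := rfl
    apply Relation.ReflTransGen.head (b := z)
    · refine ⟨fun k => by rw [hzc]; exact hzrect k, ?_⟩
      have hone : (∑ k, ((y : Fin d → ℤ) k - (z : Fin d → ℤ) k) ^ 2) = 1 := by
        apply my_sum_sq_one_of _ _ j
        · rw [hzc, hzj]
          apply my_one_sq
          omega
        · intro k hk
          rw [hzc, hzk k hk]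
      simp only [gridQ, hone, if_pos]
      norm_num
    · apply ih z y' (fun k => by rw [hzc]; exact hzrect k) hy'
      have e1 : (∑ k, ((z : Fin d → ℤ) k - (y' : Fin d → ℤ) k).natAbs)
          = ((z : Fin d → ℤ) j - (y' : Fin d → ℤ) j).natAbs +
            ∑ k ∈ Finset.univ.erase j, ((z : Fin d → ℤ) k - (y' : Fin d → ℤ) k).natAbs := by
        rw [Finset.add_sum_erase Finset.univ
          (fun k => ((z : Fin d → ℤ) k - (y' : Fin d → ℤ) k).natAbs) (Finset.mem_univ j)]
      have e2 : (∑ k, ((y : Fin d → ℤ) k - (y' : Fin d → ℤ) k).natAbs)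
          = ((y : Fin d → ℤ) j - (y' : Fin d → ℤ) j).natAbs +
            ∑ k ∈ Finset.univ.erase j, ((y : Fin d → ℤ) k - (y' : Fin d → ℤ) k).natAbs := by
        rw [Finset.add_sum_erase Finset.univ
          (fun k => ((y : Fin d → ℤ) k - (y' : Fin d → ℤ) k).natAbs) (Finset.mem_univ j)]
      have e3 : ∑ k ∈ Finset.univ.erase j, ((z : Fin d → ℤ) k - (y' : Fin d → ℤ) k).natAbs
          = ∑ k ∈ Finset.univ.erase j, ((y : Fin d → ℤ) k - (y' : Fin d → ℤ) k).natAbs := by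
        apply Finset.sum_congr rfl
        intro k hk
        rw [hzc, hzk k (Finset.mem_erase.mp hk).1]
      have e4 : ((z : Fin d → ℤ) j - (y' : Fin d → ℤ) j).natAbs + 1
          = ((y : Fin d → ℤ) j - (y' : Fin d → ℤ) j).natAbs := by
        rw [hzc, hzj]
        omega
      omega

/-- **Retraction property of hyperrectangles in the grid** (Example 4.6): if `X ⊆ ℤ^d` is a
finite connected subset containing all grid points of a nonempty hyperrectangle
`R = ∏ⱼ [aⱼ, bⱼ]`, then `Y = R ∩ ℤ^d` has the retraction property in `X`, and the
coordinatewise clamp onto `R` is a retraction. -/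
theorem grid_hyperrectangle_retraction (d : ℕ) (X : Set (Fin d → ℤ)) [Fintype ↥X]
    (a b : Fin d → ℤ) (hab : ∀ j, a j ≤ b j)
    (hXconn : ∀ u v : ↥X, Relation.ReflTransGen
      (fun p q : ↥X => (∑ j, ((p : Fin d → ℤ) j - (q : Fin d → ℤ) j) ^ 2) = 1) u v)
    (hYX : ∀ z : Fin d → ℤ, (∀ j, a j ≤ z j ∧ z j ≤ b j) → z ∈ X) :
    HasRetractionProperty (gridQ d X) (gridY d X a b) ∧
      ∀ T : ↥X → ↥X,
        (∀ (u : ↥X) (j : Fin d),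
          (T u : Fin d → ℤ) j = max (a j) (min (b j) ((u : Fin d → ℤ) j))) →
        IsRetraction (gridQ d X) (gridY d X a b) T := by
  have hret : ∀ T : ↥X → ↥X,
      (∀ (u : ↥X) (j : Fin d),
        (T u : Fin d → ℤ) j = max (a j) (min (b j) ((u : Fin d → ℤ) j))) →
      IsRetraction (gridQ d X) (gridY d X a b) T :=
    fun T hT => grid_retraction_of_clamp d X a b hab T hT
  refine ⟨⟨?_, ?_⟩, hret⟩
  · intro y hy y' hy'
    exact grid_conn d X a b hYX _ y y' hy hy' rfl
  · exact ⟨fun u => ⟨fun j => max (a j) (min (b j) ((u : Fin d → ℤ) j)),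
      hYX _ (fun j => by have := hab j; constructor <;> omega)⟩,
      hret _ (fun u j => rfl)⟩
end

section
/- Graph-theoretic characterisation of retractions for simple random walk: let X be a finite set with rates Q taking values in {0,1}, write x ~ x' iff Q(x,x') = 1, and let Y ⊆ X be connected. Then Y has the retraction property if and only if there exists a map T : X → Y such that (R1') T(y) = y for all y ∈ Y; (R2') if x ~ x' then T(x) = T(x') or T(x) ~ T(x'); (R3') if x₁' ~ x, x₂' ~ x, x₁' ≠ x₂' and T(x₁') = T(x₂'), then T(x) = T(x₁'). -/
open MeasureTheory
open scoped ENNReal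

/-- **Graph-theoretic characterisation of retractions for simple random walk** (Remark 4.3):
for `{0,1}`-valued rates, a connected subset `Y` has the retraction property if and only if
there is a map `T : X → Y` fixing `Y` (R1'), mapping edges to edges or vertices (R2'), and
such that two distinct neighbours of a point with the same image force the point to share
that image (R3'). -/
theorem retraction_characterisation_simple {X : Type*} [Fintype X] [DecidableEq X]
    (Q : X → X → ℝ)
    (hQ01 : ∀ x y, Q x y = 0 ∨ Q x y = 1)
    (hdiag : ∀ x, Q x x = 0)
    (hsym : ∀ x y, Q x y = Q y x)
    (Y : Set X) (hYconn : IsConnectedSubset Q Y) :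
    HasRetractionProperty Q Y ↔
      ∃ T : X → X, (∀ x, T x ∈ Y) ∧
        (∀ y ∈ Y, T y = y) ∧
        (∀ x x', Q x x' = 1 → T x = T x' ∨ Q (T x) (T x') = 1) ∧
        (∀ x x1 x2, Q x1 x = 1 → Q x2 x = 1 → x1 ≠ x2 → T x1 = T x2 → T x = T x1) := by
  have Qnn : ∀ a b, 0 ≤ Q a b := fun a b => by rcases hQ01 a b with h | h <;> simp [h]
  constructor
  · rintro ⟨-, T, hTY, hTfix, hTret⟩
    refine ⟨T, hTY, hTfix, ?_, ?_⟩
    · intro x x' hxx'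
      by_cases h : T x = T x'
      · exact Or.inl h
      · right
        have hmem : x' ∈ Finset.univ.filter (fun x'' => T x'' = T x') := by simp
        have h1 : (1 : ℝ) ≤ ∑ x'' ∈ Finset.univ.filter (fun x'' => T x'' = T x'), Q x x'' := by
          calc (1 : ℝ) = Q x x' := hxx'.symm
            _ ≤ _ := Finset.single_le_sum (fun i _ => Qnn x i) hmem
        have h2 := hTret (T x) (hTY x) (T x') (hTY x') h x rfl
        rcases hQ01 (T x) (T x') with h0 | h1'
        · linarith
        · exact h1'
    · intro x x1 x2 h1 h2 hne heq
      by_contra hTx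
      have h2' := hTret (T x) (hTY x) (T x1) (hTY x1) hTx x rfl
      have hsub : ({x1, x2} : Finset X) ⊆
          Finset.univ.filter (fun x' => T x' = T x1) := by
        intro a ha
        simp only [Finset.mem_insert, Finset.mem_singleton] at ha
        rcases ha with rfl | rfl <;> simp [heq.symm]
      have hpair : ∑ a ∈ ({x1, x2} : Finset X), Q x a = 2 := by
        rw [Finset.sum_pair hne, hsym x x1, hsym x x2, h1, h2]; norm_num
      have hle : (2 : ℝ) ≤ ∑ x' ∈ Finset.univ.filter (fun x' => T x' = T x1), Q x x' := by
        rw [← hpair]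
        exact Finset.sum_le_sum_of_subset_of_nonneg hsub (fun i _ _ => Qnn x i)
      rcases hQ01 (T x) (T x1) with h0 | h1' <;> linarith
  · rintro ⟨T, hTY, hTfix, hR2, hR3⟩
    refine ⟨hYconn, T, hTY, hTfix, ?_⟩
    intro y hy y' hy' hne x hTx
    set S := Finset.univ.filter (fun x' => T x' = y') with hS
    set S1 := S.filter (fun x' => Q x x' = 1) with hS1
    have hsum : ∑ x' ∈ S, Q x x' = (S1.card : ℝ) := by
      rw [hS1, ← Finset.sum_filter_of_ne (f := fun x' => Q x x') (p := fun x' => Q x x' = 1)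
        (fun a _ ha => (hQ01 x a).resolve_left ha)]
      rw [Finset.sum_congr rfl (fun a ha => (Finset.mem_filter.mp ha).2),
        Finset.sum_const, nsmul_eq_mul, mul_one]
    have hcard : S1.card ≤ 1 := by
      apply Finset.card_le_one.mpr
      intro a ha b hb
      simp only [hS1, hS, Finset.mem_filter, Finset.mem_univ, true_and] at ha hb
      by_contra hab
      have := hR3 x a b (by rw [hsym]; exact ha.2) (by rw [hsym]; exact hb.2) hab
        (ha.1.trans hb.1.symm)
      rw [hTx, ha.1] at this
      exact hne this
    rcases Finset.eq_empty_or_nonempty S1 with hemp | ⟨x', hx'⟩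
    · rw [hsum, hemp]
      simpa using Qnn y y'
    · simp only [hS1, hS, Finset.mem_filter, Finset.mem_univ, true_and] at hx'
      have hQyy' : Q y y' = 1 := by
        rcases hR2 x x' hx'.2 with h | h
        · rw [hTx, hx'.1] at h; exact absurd h hne
        · rw [hTx, hx'.1] at h; exact h
      rw [hsum, hQyy']
      exact_mod_cast hcard
end

section
/- Two-point subsets and cuts: let X be a finite set with rates Q taking values in {0,1} giving a connected graph (edge set E = {(u,v) : Q(u,v) = 1}), and let x, y ∈ X with Q(x,y) = 1. Call a disjoint decomposition X = A_x ∪ A_y with x ∈ A_x and y ∈ A_y an x–y cut, and call an edge (u,v) ∈ E with u ∈ A_x and v ∈ A_y a cross. Then the subset {x, y} has the retraction property if and only if there exists an x–y cut such that no two distinct crosses share a vertex; the correspondence is given by T⁻¹(x) = A_x, T⁻¹(y) = A_y. -/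
open MeasureTheory
open scoped ENNReal

lemma sum_le_one_aux {X : Type*} [DecidableEq X] (s : Finset X) (f : X → ℝ)
    (h01 : ∀ a ∈ s, f a = 0 ∨ f a = 1)
    (huniq : ∀ a ∈ s, ∀ b ∈ s, f a = 1 → f b = 1 → a = b) :
    ∑ a ∈ s, f a ≤ 1 := by
  by_cases h : ∃ a ∈ s, f a = 1
  · obtain ⟨a, ha, hfa⟩ := h
    rw [Finset.sum_eq_single_of_mem a ha]
    · exact le_of_eq hfa
    · intro b hb hne
      rcases h01 b hb with h0 | h1
      · exact h0
      · exact absurd (huniq b hb a ha h1 hfa) hne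
  · push_neg at h
    have hz : ∑ a ∈ s, f a = 0 :=
      Finset.sum_eq_zero fun a ha => (h01 a ha).resolve_right (h a ha)
    simp [hz]

/-- **Two-point subsets and cuts** (Example 4.7): for `{0,1}`-valued symmetric rates on a
connected graph and an edge `Q(x,y) = 1`, the subset `{x, y}` has the retraction property if
and only if there is an `x`-`y` cut `X = Aₓ ∪ A_y` such that no two distinct crosses share a
vertex; the correspondence is given by `T⁻¹(x) = Aₓ`, `T⁻¹(y) = A_y`. -/
theorem two_point_retraction_cut {X : Type*} [Fintype X] [DecidableEq X]
    (Q : X → X → ℝ)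
    (hQ01 : ∀ u v, Q u v = 0 ∨ Q u v = 1)
    (hdiag : ∀ u, Q u u = 0)
    (hsym : ∀ u v, Q u v = Q v u)
    (hconn : ∀ u v : X, Relation.ReflTransGen (fun a b => 0 < Q a b) u v)
    (x y : X) (hxy : Q x y = 1) :
    (HasRetractionProperty Q {x, y} ↔
      ∃ Ax Ay : Set X, Ax ∪ Ay = Set.univ ∧ Ax ∩ Ay = ∅ ∧ x ∈ Ax ∧ y ∈ Ay ∧
        (∀ u v u' v', u ∈ Ax → v ∈ Ay → Q u v = 1 → u' ∈ Ax → v' ∈ Ay → Q u' v' = 1 →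
          (u = u' ∨ v = v') → u = u' ∧ v = v')) ∧
    (∀ Ax Ay : Set X, Ax ∪ Ay = Set.univ → Ax ∩ Ay = ∅ → x ∈ Ax → y ∈ Ay →
        (∀ u v u' v', u ∈ Ax → v ∈ Ay → Q u v = 1 → u' ∈ Ax → v' ∈ Ay → Q u' v' = 1 →
          (u = u' ∨ v = v') → u = u' ∧ v = v') →
        ∃ T : X → X, IsRetraction Q {x, y} T ∧ T ⁻¹' {x} = Ax ∧ T ⁻¹' {y} = Ay) := by
  classical
  have hxney : x ≠ y := by
    intro h; rw [h, hdiag] at hxy; norm_num at hxy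
  have hQnn : ∀ u v, 0 ≤ Q u v := fun u v => by
    rcases hQ01 u v with h | h <;> simp [h]
  have hQyx : Q y x = 1 := by rw [hsym]; exact hxy
  -- the key construction: from a cut, build the retraction
  have key : ∀ Ax Ay : Set X, Ax ∪ Ay = Set.univ → Ax ∩ Ay = ∅ → x ∈ Ax → y ∈ Ay →
      (∀ u v u' v', u ∈ Ax → v ∈ Ay → Q u v = 1 → u' ∈ Ax → v' ∈ Ay → Q u' v' = 1 →
        (u = u' ∨ v = v') → u = u' ∧ v = v') →
      ∃ T : X → X, IsRetraction Q {x, y} T ∧ T ⁻¹' {x} = Ax ∧ T ⁻¹' {y} = Ay := by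
    intro Ax Ay hUn hInt hx hy hcross
    have hAy : ∀ u, u ∉ Ax → u ∈ Ay := by
      intro u hu
      have : u ∈ Ax ∪ Ay := hUn ▸ Set.mem_univ u
      exact this.resolve_left hu
    have hnot : ∀ u, u ∈ Ax → u ∉ Ay := by
      intro u h1 h2
      have : u ∈ Ax ∩ Ay := ⟨h1, h2⟩
      rw [hInt] at this; exact this
    set T : X → X := fun u => if u ∈ Ax then x else y with hTdef
    have hTx : ∀ u, u ∈ Ax → T u = x := fun u h => if_pos h
    have hTy : ∀ u, u ∉ Ax → T u = y := fun u h => if_neg h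
    have hTx' : ∀ u, T u = x → u ∈ Ax := by
      intro u h
      by_contra hc
      rw [hTy u hc] at h
      exact hxney h.symm
    have hTy' : ∀ u, T u = y → u ∈ Ay := by
      intro u h
      refine hAy u (fun hc => hxney ?_)
      rw [← hTx u hc, h]
    have hynAx : y ∉ Ax := fun h => hnot y h hy
    refine ⟨T, ⟨?_, ?_, ?_⟩, ?_, ?_⟩
    · intro u
      by_cases h : u ∈ Ax
      · rw [hTx u h]; exact Or.inl rfl
      · rw [hTy u h]; exact Or.inr rfl
    · intro z hz
      rcases hz with h | h
      · rw [h]; exact hTx x hx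
      · rw [Set.mem_singleton_iff] at h
        rw [h]; exact hTy y hynAx
    · intro y₁ hy₁ y₂ hy₂ hne u hTu
      simp only [Set.mem_insert_iff, Set.mem_singleton_iff] at hy₁ hy₂
      rcases hy₁ with h1 | h1 <;> rcases hy₂ with h2 | h2
      · exact absurd (h1.trans h2.symm) hne
      · -- y₁ = x, y₂ = y
        rw [h1] at hTu
        rw [h1, h2, hxy]
        have hu : u ∈ Ax := hTx' u hTu
        apply sum_le_one_aux
        · intro a _; exact hQ01 u a
        · intro a ha b hb hfa hfb
          simp only [Finset.mem_filter, h2] at ha hb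
          exact (hcross u a u b hu (hTy' a ha.2) hfa hu (hTy' b hb.2) hfb (Or.inl rfl)).2
      · -- y₁ = y, y₂ = x
        rw [h1] at hTu
        rw [h1, h2, hQyx]
        have hu : u ∈ Ay := hTy' u hTu
        apply sum_le_one_aux
        · intro a _; exact hQ01 u a
        · intro a ha b hb hfa hfb
          simp only [Finset.mem_filter, h2] at ha hb
          have hfa' : Q a u = 1 := by rw [hsym]; exact hfa
          have hfb' : Q b u = 1 := by rw [hsym]; exact hfb
          exact (hcross a u b u (hTx' a ha.2) hu hfa' (hTx' b hb.2) hu hfb' (Or.inr rfl)).1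
      · exact absurd (h1.trans h2.symm) hne
    · ext u
      simp only [Set.mem_preimage, Set.mem_singleton_iff]
      exact ⟨hTx' u, hTx u⟩
    · ext u
      simp only [Set.mem_preimage, Set.mem_singleton_iff]
      exact ⟨hTy' u, fun h => hTy u (fun hc => hnot u hc h)⟩
  constructor
  · constructor
    · -- forward: retraction gives a cut
      rintro ⟨-, T, hTmem, hTfix, hTsum⟩
      refine ⟨T ⁻¹' {x}, T ⁻¹' {y}, ?_, ?_, ?_, ?_, ?_⟩
      · ext u
        simp only [Set.mem_union, Set.mem_preimage, Set.mem_singleton_iff, Set.mem_univ,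
          iff_true]
        have := hTmem u
        rcases this with h | h
        · exact Or.inl h
        · exact Or.inr h
      · ext u
        simp only [Set.mem_inter_iff, Set.mem_preimage, Set.mem_singleton_iff,
          Set.mem_empty_iff_false, iff_false, not_and]
        intro h1 h2; exact hxney (h1 ▸ h2 ▸ rfl)
      · exact hTfix x (Or.inl rfl)
      · exact hTfix y (Or.inr rfl)
      · intro u v u' v' hu hv hQuv hu' hv' hQu'v' hor
        simp only [Set.mem_preimage, Set.mem_singleton_iff] at hu hv hu' hv'
        rcases hor with rfl | rfl
        · refine ⟨rfl, ?_⟩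
          by_contra hvv'
          have hsum := hTsum x (Or.inl rfl) y (Or.inr rfl) hxney u hu
          have hsub : ({v, v'} : Finset X) ⊆ Finset.univ.filter (fun x' => T x' = y) := by
            intro a ha
            simp only [Finset.mem_insert, Finset.mem_singleton] at ha
            rcases ha with rfl | rfl <;> simp [hv, hv']
          have h2 : ∑ a ∈ ({v, v'} : Finset X), Q u a ≤
              ∑ x' ∈ Finset.univ.filter (fun x' => T x' = y), Q u x' :=
            Finset.sum_le_sum_of_subset_of_nonneg hsub (fun a _ _ => hQnn u a)
          rw [Finset.sum_pair hvv'] at h2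
          rw [hxy] at hsum
          linarith [hQuv, hQu'v']
        · refine ⟨?_, rfl⟩
          by_contra huu'
          have hsum := hTsum y (Or.inr rfl) x (Or.inl rfl) (Ne.symm hxney) v hv
          have hsub : ({u, u'} : Finset X) ⊆ Finset.univ.filter (fun x' => T x' = x) := by
            intro a ha
            simp only [Finset.mem_insert, Finset.mem_singleton] at ha
            rcases ha with rfl | rfl <;> simp [hu, hu']
          have h2 : ∑ a ∈ ({u, u'} : Finset X), Q v a ≤
              ∑ x' ∈ Finset.univ.filter (fun x' => T x' = x), Q v x' :=
            Finset.sum_le_sum_of_subset_of_nonneg hsub (fun a _ _ => hQnn v a)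
          rw [Finset.sum_pair huu'] at h2
          rw [hQyx] at hsum
          have e1 : Q v u = 1 := by rw [hsym]; exact hQuv
          have e2 : Q v u' = 1 := by rw [hsym]; exact hQu'v'
          linarith
    · -- backward: cut gives retraction property
      rintro ⟨Ax, Ay, hUn, hInt, hx, hy, hcross⟩
      obtain ⟨T, hT, -, -⟩ := key Ax Ay hUn hInt hx hy hcross
      refine ⟨?_, T, hT⟩
      intro a ha b hb
      simp only [Set.mem_insert_iff, Set.mem_singleton_iff] at ha hb
      rcases ha with rfl | rfl <;> rcases hb with rfl | rfl
      · exact Relation.ReflTransGen.refl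
      · exact Relation.ReflTransGen.single ⟨Or.inr rfl, by rw [hxy]; norm_num⟩
      · exact Relation.ReflTransGen.single ⟨Or.inl rfl, by rw [hQyx]; norm_num⟩
      · exact Relation.ReflTransGen.refl
  · exact key
end

section
/- Retraction property of subtrees: let X be a finite set with rates Q : X × X → [0,∞) such that the induced graph (X, E), with E = {(x,y) : Q(x,y) > 0}, is a tree (connected and acyclic). Then every connected subset Y ⊆ X (a subtree) has the retraction property. A retraction is obtained by fixing y ∈ Y and sending each x ∈ X to the first point of Y on the unique simple path from x to y. -/
open MeasureTheory
open scoped ENNReal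

section SubtreeAux

open SimpleGraph

/-- The first vertex of a walk belonging to `Y`. -/
def firstIn {X : Type*} (Y : Set X) [DecidablePred (· ∈ Y)] {G : SimpleGraph X} :
    {x y : X} → G.Walk x y → X
  | x, _, SimpleGraph.Walk.nil => x
  | x, _, SimpleGraph.Walk.cons _ p => if x ∈ Y then x else firstIn Y p

lemma firstIn_of_mem {X : Type*} {Y : Set X} [DecidablePred (· ∈ Y)] {G : SimpleGraph X}
    {x y : X} (p : G.Walk x y) (hx : x ∈ Y) : firstIn Y p = x := by
  cases p <;> simp [firstIn, hx]

lemma firstIn_cons {X : Type*} {Y : Set X} [DecidablePred (· ∈ Y)] {G : SimpleGraph X}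
    {x x' y : X} (h : G.Adj x x') (p : G.Walk x' y) (hx : x ∉ Y) :
    firstIn Y (SimpleGraph.Walk.cons h p) = firstIn Y p := by
  simp [firstIn, hx]

lemma firstIn_mem {X : Type*} {Y : Set X} [DecidablePred (· ∈ Y)] {G : SimpleGraph X} :
    ∀ {x y : X} (p : G.Walk x y), y ∈ Y → firstIn Y p ∈ Y ∧ firstIn Y p ∈ p.support
  | x, _, SimpleGraph.Walk.nil, hy => ⟨by simpa [firstIn] using hy, by simp [firstIn]⟩
  | x, y, SimpleGraph.Walk.cons h p, hy => by
    by_cases hx : x ∈ Y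
    · simp [firstIn, hx]
    · have hind := firstIn_mem p hy
      simp only [firstIn_cons h p hx]
      exact ⟨hind.1, by simp [hind.2]⟩

end SubtreeAux

/-- **Retraction property of subtrees** (Example 4.9): if the graph induced by the rates `Q`
is a tree, then every nonempty connected subset (subtree) `Y ⊆ X` has the retraction
property. -/
theorem subtree_retraction {X : Type*} [Fintype X] [DecidableEq X]
    (Q : X → X → ℝ)
    (hQnn : ∀ x y, 0 ≤ Q x y)
    (hdiag : ∀ x, Q x x = 0)
    (hsym : ∀ x y, 0 < Q x y ↔ 0 < Q y x)
    (htree : (SimpleGraph.fromRel (fun a b : X => 0 < Q a b)).IsTree)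
    (Y : Set X) (hYconn : IsConnectedSubset Q Y) (hYne : Y.Nonempty) :
    HasRetractionProperty Q Y := by
  classical
  obtain ⟨y₀, hy₀⟩ := hYne
  set G := SimpleGraph.fromRel (fun a b : X => 0 < Q a b) with hGdef
  have hadj : ∀ a b : X, 0 < Q a b → G.Adj a b := by
    intro a b hab
    have hne : a ≠ b := by
      rintro rfl; rw [hdiag a] at hab; exact lt_irrefl 0 hab
    exact (SimpleGraph.fromRel_adj _ a b).2 ⟨hne, Or.inl hab⟩
  have hadjQ : ∀ a b : X, G.Adj a b → 0 < Q a b := by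
    intro a b hab
    rcases (SimpleGraph.fromRel_adj _ a b).1 hab with ⟨_, h | h⟩
    · exact h
    · exact (hsym a b).2 h
  -- the chosen unique path from each point to `y₀`
  have upath : ∀ x : X, ∃! p : G.Walk x y₀, p.IsPath := fun x => htree.existsUnique_path x y₀
  let P : ∀ x : X, G.Walk x y₀ := fun x => (upath x).choose
  have hP : ∀ x, (P x).IsPath := fun x => (upath x).choose_spec.1
  have hPuniq : ∀ x (q : G.Walk x y₀), q.IsPath → q = P x := fun x q hq =>
    (upath x).choose_spec.2 q hq
  -- the retraction
  let T : X → X := fun x => firstIn Y (P x)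
  have hTmem : ∀ x, T x ∈ Y := fun x => (firstIn_mem (P x) hy₀).1
  have hTsupp : ∀ x, T x ∈ (P x).support := fun x => (firstIn_mem (P x) hy₀).2
  have hTfix : ∀ y ∈ Y, T y = y := fun y hy => firstIn_of_mem (P y) hy
  -- convexity: any path between two points of `Y` stays in `Y`
  have hwalk : ∀ y ∈ Y, ∀ y' : X, Relation.ReflTransGen (fun a b => b ∈ Y ∧ 0 < Q a b) y y' →
      ∃ w : G.Walk y y', ∀ u ∈ w.support, u ∈ Y := by
    intro y hy y' hrtg
    induction hrtg with
    | refl => exact ⟨SimpleGraph.Walk.nil, by simpa using hy⟩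
    | @tail b c _ step ih =>
      obtain ⟨w, hw⟩ := ih
      refine ⟨w.concat (hadj b c step.2), ?_⟩
      intro u hu
      rw [SimpleGraph.Walk.support_concat, List.mem_append] at hu
      rcases hu with hu | hu
      · exact hw u hu
      · rw [List.mem_singleton] at hu
        simpa [hu] using step.1
  have hconv : ∀ y ∈ Y, ∀ y' ∈ Y, ∀ (p : G.Walk y y'), p.IsPath → ∀ v ∈ p.support, v ∈ Y := by
    intro y hy y' hy' p hp v hv
    obtain ⟨w, hw⟩ := hwalk y hy y' (hYconn y hy y' hy')
    have heq : p = w.bypass := by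
      have := htree.IsAcyclic.path_unique ⟨p, hp⟩ ⟨w.bypass, w.bypass_isPath⟩
      exact congrArg Subtype.val this
    exact hw v (w.support_bypass_subset (heq ▸ hv))
  -- dichotomy for adjacent vertices: one chosen path extends the other
  have hstep : ∀ x x' (h : G.Adj x x'),
      P x = SimpleGraph.Walk.cons h (P x') ∨ P x' = SimpleGraph.Walk.cons h.symm (P x) := by
    intro x x' h
    by_cases hx : x ∈ (P x').support
    · right
      have h1 : (P x').dropUntil x hx = P x := hPuniq x _ ((hP x').dropUntil hx)
      have h2 : (P x').takeUntil x hx = SimpleGraph.Walk.cons h.symm SimpleGraph.Walk.nil := by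
        have hcons : (SimpleGraph.Walk.cons h.symm (SimpleGraph.Walk.nil) : G.Walk x' x).IsPath := by
          simp [SimpleGraph.Walk.cons_isPath_iff, h.ne']
        have := htree.IsAcyclic.path_unique
          ⟨(P x').takeUntil x hx, (hP x').takeUntil hx⟩ ⟨_, hcons⟩
        exact congrArg Subtype.val this
      calc P x' = ((P x').takeUntil x hx).append ((P x').dropUntil x hx) :=
              ((P x').take_spec hx).symm
        _ = (SimpleGraph.Walk.cons h.symm SimpleGraph.Walk.nil).append (P x) := by
              rw [h1, h2]
        _ = SimpleGraph.Walk.cons h.symm (P x) := by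
              rw [SimpleGraph.Walk.cons_append, SimpleGraph.Walk.nil_append]
    · left
      exact (hPuniq x _ ((hP x').cons hx)).symm
  -- main half-step: if `P a` extends `P b` and `T a ≠ T b` then both endpoints are in `Y`
  have hhalf : ∀ a b (h : G.Adj a b), P a = SimpleGraph.Walk.cons h (P b) → T a ≠ T b →
      a ∈ Y ∧ b ∈ Y := by
    intro a b h hPab hne
    have ha : a ∈ Y := by
      by_contra ha
      apply hne
      show firstIn Y (P a) = firstIn Y (P b)
      rw [hPab, firstIn_cons h (P b) ha]
    refine ⟨ha, ?_⟩
    by_contra hb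
    have hc : T b ∈ Y := hTmem b
    have hcm : T b ∈ (P b).support := hTsupp b
    have hna : a ∉ (P b).support := by
      have := hP a
      rw [hPab, SimpleGraph.Walk.cons_isPath_iff] at this
      exact this.2
    have hq : (SimpleGraph.Walk.cons h ((P b).takeUntil (T b) hcm)).IsPath :=
      ((hP b).takeUntil hcm).cons
        (fun hmem => hna ((P b).support_takeUntil_subset hcm hmem))
    have hbmem : b ∈ (SimpleGraph.Walk.cons h ((P b).takeUntil (T b) hcm)).support := by
      simp [SimpleGraph.Walk.support_cons, SimpleGraph.Walk.start_mem_support]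
    exact hb (hconv a ha (T b) hc _ hq b hbmem)
  -- key claim
  have hkey : ∀ x x', 0 < Q x x' → T x ≠ T x' → x ∈ Y ∧ x' ∈ Y := by
    intro x x' hQ hne
    have h := hadj x x' hQ
    rcases hstep x x' h with hc | hc
    · exact hhalf x x' h hc hne
    · exact (hhalf x' x h.symm hc hne.symm).symm
  refine ⟨hYconn, T, hTmem, hTfix, ?_⟩
  intro y hy y' hy' hne x hx
  have hterm : ∀ x' ∈ Finset.univ.filter (fun x' => T x' = y'),
      Q x x' ≤ if x' = y' then Q y y' else 0 := by
    intro x' hx'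
    have hTx' : T x' = y' := (Finset.mem_filter.1 hx').2
    rcases le_or_gt (Q x x') 0 with hle | hpos
    · refine hle.trans ?_
      split <;> [exact hQnn y y'; exact le_refl 0]
    · have hTne : T x ≠ T x' := by rw [hx, hTx']; exact hne
      obtain ⟨hxY, hx'Y⟩ := hkey x x' hpos hTne
      have hxy : x = y := by rw [← hx, hTfix x hxY]
      have hx'y' : x' = y' := by rw [← hTx', hTfix x' hx'Y]
      rw [if_pos hx'y', hxy, hx'y']
  calc (∑ x' ∈ Finset.univ.filter (fun x' => T x' = y'), Q x x')
      ≤ ∑ x' ∈ Finset.univ.filter (fun x' => T x' = y'), (if x' = y' then Q y y' else 0) :=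
        Finset.sum_le_sum hterm
    _ ≤ Q y y' := by
        rw [Finset.sum_ite_eq' (Finset.univ.filter (fun x' => T x' = y')) y' (fun _ => Q y y')]
        split <;> [exact le_refl _; exact hQnn y y']
end

section
/- Stationarity for the glued chain: let (X₁, Q₁, π₁) and (X₂, Q₂, π₂) be Markov triples and let (X, Q) be their gluing at x₁ ∈ X₁, x₂ ∈ X₂ with glued point ∗. Then Q is irreducible, and the measure π on X defined by π(x) = c·π₁(x)π₂(x₂) for x ∈ X₁∖{x₁}, π(x) = c·π₁(x₁)π₂(x) for x ∈ X₂∖{x₂}, and π(∗) = c·π₁(x₁)π₂(x₂), with normalising constant c = 1/(1 − π₁(X₁∖{x₁})·π₂(X₂∖{x₂})), is a probability measure satisfying the detailed balance condition π(x)Q(x,y) = π(y)Q(y,x) for all x, y ∈ X; hence it is the unique stationary probability measure of Q. -/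
open MeasureTheory
open scoped ENNReal

/-- **Stationarity for the glued chain** (Section 5): gluing two Markov triples at
`x₁ ∈ X₁`, `x₂ ∈ X₂` (the glued space `X` being described by injections `j₁, j₂` identifying
exactly `x₁` with `x₂`) yields irreducible rates `Q`, and the explicitly given measure `π`
is a probability measure satisfying detailed balance; hence it is the unique stationary
probability measure of `Q`. -/
theorem glued_chain_stationary
    {X1 X2 X : Type*} [Fintype X1] [Fintype X2] [Fintype X]
    (Q1 : X1 → X1 → ℝ) (pm1 : X1 → ℝ) (Q2 : X2 → X2 → ℝ) (pm2 : X2 → ℝ)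
    (h1 : IsMarkovTriple Q1 pm1) (h2 : IsMarkovTriple Q2 pm2)
    (x1 : X1) (x2 : X2)
    (j1 : X1 → X) (j2 : X2 → X)
    (hj1 : Function.Injective j1) (hj2 : Function.Injective j2)
    (hglue : j1 x1 = j2 x2)
    (hcover : ∀ x : X, (∃ a, j1 a = x) ∨ (∃ b, j2 b = x))
    (hsep : ∀ a b, j1 a = j2 b → a = x1 ∧ b = x2)
    (Q : X → X → ℝ)
    (hQ11 : ∀ a a', Q (j1 a) (j1 a') = Q1 a a')
    (hQ22 : ∀ b b', Q (j2 b) (j2 b') = Q2 b b')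
    (hQ12 : ∀ a b, a ≠ x1 → b ≠ x2 → Q (j1 a) (j2 b) = 0 ∧ Q (j2 b) (j1 a) = 0)
    (pm : X → ℝ)
    (hpm1 : ∀ a, pm (j1 a) = (1 - (1 - pm1 x1) * (1 - pm2 x2))⁻¹ * (pm1 a * pm2 x2))
    (hpm2 : ∀ b, pm (j2 b) = (1 - (1 - pm1 x1) * (1 - pm2 x2))⁻¹ * (pm1 x1 * pm2 b)) :
    (∀ x y : X, Relation.ReflTransGen (fun u v => 0 < Q u v) x y) ∧
    IsProb pm ∧
    (∀ x y, pm x * Q x y = pm y * Q y x) ∧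
    (∀ y, ∑ x, pm x * Q x y = pm y * ∑ x, Q y x) ∧
    (∀ pm' : X → ℝ, IsProb pm' →
      (∀ y, ∑ x, pm' x * Q x y = pm' y * ∑ x, Q y x) → pm' = pm) := by
  classical
  obtain ⟨hQ1nn, hQ1diag, hQ1irr, ⟨hpm1nn, hpm1sum⟩, hpm1pos, hrev1⟩ := h1
  obtain ⟨hQ2nn, hQ2diag, hQ2irr, ⟨hpm2nn, hpm2sum⟩, hpm2pos, hrev2⟩ := h2
  haveI : Nonempty X := ⟨j1 x1⟩
  have hle1 : pm1 x1 ≤ 1 :=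
    hpm1sum ▸ Finset.single_le_sum (fun i _ => hpm1nn i) (Finset.mem_univ x1)
  have hle2 : pm2 x2 ≤ 1 :=
    hpm2sum ▸ Finset.single_le_sum (fun i _ => hpm2nn i) (Finset.mem_univ x2)
  have hp1 := hpm1pos x1
  have hp2 := hpm2pos x2
  have hD : 0 < 1 - (1 - pm1 x1) * (1 - pm2 x2) := by nlinarith
  have hcpos : 0 < (1 - (1 - pm1 x1) * (1 - pm2 x2))⁻¹ := inv_pos.mpr hD
  -- positivity of pm
  have hpmpos : ∀ x, 0 < pm x := by
    intro x
    rcases hcover x with ⟨a, rfl⟩ | ⟨b, rfl⟩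
    · rw [hpm1]; exact mul_pos hcpos (mul_pos (hpm1pos a) hp2)
    · rw [hpm2]; exact mul_pos hcpos (mul_pos hp1 (hpm2pos b))
  -- case analysis for pairs of points
  have hcase : ∀ x y : X, (∃ a a', x = j1 a ∧ y = j1 a') ∨
      (∃ b b', x = j2 b ∧ y = j2 b') ∨ (Q x y = 0 ∧ Q y x = 0) := by
    intro x y
    rcases hcover x with ⟨a, rfl⟩ | ⟨b, rfl⟩ <;> rcases hcover y with ⟨a', rfl⟩ | ⟨b', rfl⟩
    · exact Or.inl ⟨a, a', rfl, rfl⟩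
    · by_cases ha : a = x1
      · subst ha; exact Or.inr (Or.inl ⟨x2, b', hglue, rfl⟩)
      · by_cases hb : b' = x2
        · subst hb; exact Or.inl ⟨a, x1, rfl, hglue.symm⟩
        · exact Or.inr (Or.inr (hQ12 a b' ha hb))
    · by_cases ha : a' = x1
      · subst ha; exact Or.inr (Or.inl ⟨b, x2, rfl, hglue⟩)
      · by_cases hb : b = x2
        · subst hb; exact Or.inl ⟨x1, a', hglue.symm, rfl⟩
        · exact Or.inr (Or.inr ⟨(hQ12 a' b ha hb).2, (hQ12 a' b ha hb).1⟩)
    · exact Or.inr (Or.inl ⟨b, b', rfl, rfl⟩)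
  have hQnn : ∀ x y : X, 0 ≤ Q x y := by
    intro x y
    rcases hcase x y with ⟨a, a', rfl, rfl⟩ | ⟨b, b', rfl, rfl⟩ | ⟨h0, -⟩
    · rw [hQ11]; exact hQ1nn a a'
    · rw [hQ22]; exact hQ2nn b b'
    · exact le_of_eq h0.symm
  -- detailed balance
  have hdb : ∀ x y : X, pm x * Q x y = pm y * Q y x := by
    intro x y
    rcases hcase x y with ⟨a, a', rfl, rfl⟩ | ⟨b, b', rfl, rfl⟩ | ⟨h0, h0'⟩
    · rw [hpm1, hpm1, hQ11, hQ11]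
      linear_combination ((1 - (1 - pm1 x1) * (1 - pm2 x2))⁻¹ * pm2 x2) * hrev1 a a'
    · rw [hpm2, hpm2, hQ22, hQ22]
      linear_combination ((1 - (1 - pm1 x1) * (1 - pm2 x2))⁻¹ * pm1 x1) * hrev2 b b'
    · rw [h0, h0']; ring
  -- total mass
  have hsum : ∑ x, pm x = 1 := by
    have himg : (Finset.univ.image j1) ∪ (Finset.univ.image j2) = Finset.univ := by
      refine Finset.eq_univ_iff_forall.mpr fun x => ?_
      rcases hcover x with ⟨a, rfl⟩ | ⟨b, rfl⟩ <;>
        simp [Finset.mem_union, Finset.mem_image]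
    have hint : (Finset.univ.image j1) ∩ (Finset.univ.image j2) = {j1 x1} := by
      ext x
      simp only [Finset.mem_inter, Finset.mem_image, Finset.mem_singleton,
        Finset.mem_univ, true_and]
      constructor
      · rintro ⟨⟨a, rfl⟩, ⟨b, hb⟩⟩
        rw [(hsep a b hb.symm).1]
      · rintro rfl; exact ⟨⟨x1, rfl⟩, ⟨x2, hglue.symm⟩⟩
    have hkey := Finset.sum_union_inter (s₁ := Finset.univ.image j1)
      (s₂ := Finset.univ.image j2) (f := pm)
    rw [himg, hint, Finset.sum_singleton,
      Finset.sum_image (fun a _ a' _ h => hj1 h),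
      Finset.sum_image (fun b _ b' _ h => hj2 h)] at hkey
    simp only [hpm1, hpm2] at hkey
    have e1 : ∑ a, (1 - (1 - pm1 x1) * (1 - pm2 x2))⁻¹ * (pm1 a * pm2 x2)
        = (1 - (1 - pm1 x1) * (1 - pm2 x2))⁻¹ * pm2 x2 := by
      calc ∑ a, (1 - (1 - pm1 x1) * (1 - pm2 x2))⁻¹ * (pm1 a * pm2 x2)
          = ∑ a, ((1 - (1 - pm1 x1) * (1 - pm2 x2))⁻¹ * pm2 x2) * pm1 a :=
            Finset.sum_congr rfl fun a _ => by ring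
        _ = ((1 - (1 - pm1 x1) * (1 - pm2 x2))⁻¹ * pm2 x2) * ∑ a, pm1 a :=
            (Finset.mul_sum _ _ _).symm
        _ = (1 - (1 - pm1 x1) * (1 - pm2 x2))⁻¹ * pm2 x2 := by rw [hpm1sum, mul_one]
    have e2 : ∑ b, (1 - (1 - pm1 x1) * (1 - pm2 x2))⁻¹ * (pm1 x1 * pm2 b)
        = (1 - (1 - pm1 x1) * (1 - pm2 x2))⁻¹ * pm1 x1 := by
      calc ∑ b, (1 - (1 - pm1 x1) * (1 - pm2 x2))⁻¹ * (pm1 x1 * pm2 b)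
          = ∑ b, ((1 - (1 - pm1 x1) * (1 - pm2 x2))⁻¹ * pm1 x1) * pm2 b :=
            Finset.sum_congr rfl fun b _ => by ring
        _ = ((1 - (1 - pm1 x1) * (1 - pm2 x2))⁻¹ * pm1 x1) * ∑ b, pm2 b :=
            (Finset.mul_sum _ _ _).symm
        _ = (1 - (1 - pm1 x1) * (1 - pm2 x2))⁻¹ * pm1 x1 := by rw [hpm2sum, mul_one]
    rw [e1, e2] at hkey
    have hcD : (1 - (1 - pm1 x1) * (1 - pm2 x2))⁻¹ * (1 - (1 - pm1 x1) * (1 - pm2 x2)) = 1 :=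
      inv_mul_cancel₀ (ne_of_gt hD)
    linear_combination hkey + hcD
  -- irreducibility
  have hstep1 : ∀ a a' : X1,
      Relation.ReflTransGen (fun u v : X => 0 < Q u v) (j1 a) (j1 a') := fun a a' =>
    Relation.ReflTransGen.lift j1 (fun u v huv => by simpa [Function.onFun, hQ11] using huv) _ _ (hQ1irr a a')
  have hstep2 : ∀ b b' : X2,
      Relation.ReflTransGen (fun u v : X => 0 < Q u v) (j2 b) (j2 b') := fun b b' =>
    Relation.ReflTransGen.lift j2 (fun u v huv => by simpa [Function.onFun, hQ22] using huv) _ _ (hQ2irr b b')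
  have hirr : ∀ x y : X, Relation.ReflTransGen (fun u v : X => 0 < Q u v) x y := by
    intro x y
    have hx : Relation.ReflTransGen (fun u v : X => 0 < Q u v) x (j1 x1) := by
      rcases hcover x with ⟨a, rfl⟩ | ⟨b, rfl⟩
      · exact hstep1 a x1
      · rw [hglue]; exact hstep2 b x2
    have hy : Relation.ReflTransGen (fun u v : X => 0 < Q u v) (j1 x1) y := by
      rcases hcover y with ⟨a, rfl⟩ | ⟨b, rfl⟩
      · exact hstep1 x1 a
      · rw [hglue]; exact hstep2 x2 b
    exact hx.trans hy
  -- stationarity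
  have hstat : ∀ y, ∑ x, pm x * Q x y = pm y * ∑ x, Q y x := by
    intro y
    rw [Finset.mul_sum]
    exact Finset.sum_congr rfl fun x _ => hdb x y
  have hQsymm : ∀ x y : X, 0 < Q x y → 0 < Q y x := by
    intro x y hxy
    have h := hdb x y
    nlinarith [hpmpos x, hpmpos y, hQnn y x, mul_pos (hpmpos x) hxy]
  refine ⟨hirr, ⟨fun x => (hpmpos x).le, hsum⟩, hdb, hstat, ?_⟩
  -- uniqueness
  intro pm' ⟨hnn', hsum'⟩ hstat'
  set r : X → ℝ := fun x => pm' x / pm x with hrdef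
  have hpm'eq : ∀ x, pm' x = r x * pm x := fun x =>
    (div_mul_cancel₀ (pm' x) (ne_of_gt (hpmpos x))).symm
  have hzero : ∀ y, ∑ x, (r x - r y) * (pm x * Q x y) = 0 := by
    intro y
    have h1 : ∑ x, pm' x * Q x y = ∑ x, r x * (pm x * Q x y) :=
      Finset.sum_congr rfl fun x _ => by rw [hpm'eq x]; ring
    have h2 : pm' y * ∑ x, Q y x = ∑ x, r y * (pm x * Q x y) := by
      rw [Finset.mul_sum]
      refine Finset.sum_congr rfl fun x _ => ?_
      rw [hdb x y, hpm'eq y]; ring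
    have h3 := hstat' y
    rw [h1, h2] at h3
    simp only [sub_mul]
    rw [Finset.sum_sub_distrib, h3, sub_self]
  obtain ⟨y0, -, hy0⟩ := Finset.exists_min_image (Finset.univ : Finset X) r
    ⟨Classical.arbitrary X, Finset.mem_univ _⟩
  have hmin : ∀ x, r y0 ≤ r x := fun x => hy0 x (Finset.mem_univ x)
  have hkey : ∀ y, r y = r y0 → ∀ x, 0 < Q x y → r x = r y0 := by
    intro y hy x hQxy
    have hnnterm : ∀ x ∈ (Finset.univ : Finset X), 0 ≤ (r x - r y) * (pm x * Q x y) :=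
      fun x _ => mul_nonneg (by rw [hy]; linarith [hmin x])
        (mul_nonneg (hpmpos x).le (hQnn x y))
    have h0 := (Finset.sum_eq_zero_iff_of_nonneg hnnterm).mp (hzero y) x (Finset.mem_univ x)
    have hpq : 0 < pm x * Q x y := mul_pos (hpmpos x) hQxy
    rcases mul_eq_zero.mp h0 with h | h
    · rw [← hy]; linarith
    · exact absurd h (ne_of_gt hpq)
  have hconst : ∀ z, r z = r y0 := by
    intro z
    have hpath := hirr y0 z
    induction hpath with
    | refl => rfl
    | tail hp hstep ih => exact hkey _ ih _ (hQsymm _ _ hstep)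
  have hr1 : r y0 = 1 := by
    have hs : ∑ x, pm' x = r y0 * ∑ x, pm x := by
      rw [Finset.mul_sum]
      exact Finset.sum_congr rfl fun x _ => by rw [hpm'eq x, hconst x]
    rw [hsum', hsum] at hs
    linarith
  funext x
  rw [hpm'eq x, hconst x, hr1, one_mul]
end

section
/- Retraction onto a component of a glued space: let (X, Q, π) be a Markov triple and suppose X₂ ⊆ X is a dead end for X₁ ⊆ X, i.e. X = X₁ ∪ X₂, X₁ ∩ X₂ = {∗}, X₁ is connected, and Q(x,y) = Q(y,x) = 0 whenever x ∈ X₁∖{∗} and y ∈ X₂∖{∗}. Then the map T : X → X₁ defined by T(x) = x for x ∈ X₁ and T(x) = ∗ for x ∈ X₂∖{∗} is a retraction; in particular X₁ has the retraction property as a subset of X. -/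
open MeasureTheory
open scoped ENNReal

/-- **Retraction onto a component of a glued space** (Proposition 5.5): if `X₂` is a dead end
for `X₁` (intersection `{∗}`, no rates between `X₁∖{∗}` and `X₂∖{∗}`), then the map fixing
`X₁` and collapsing `X₂` to `∗` is a retraction, so `X₁` has the retraction property. -/
theorem dead_end_retraction {X : Type*} [Fintype X] [DecidableEq X]
    (Q : X → X → ℝ) (pm : X → ℝ) (hMT : IsMarkovTriple Q pm)
    (X1 X2 : Set X) [DecidablePred (· ∈ X1)] (star : X)
    (hcover : X1 ∪ X2 = Set.univ) (hinter : X1 ∩ X2 = {star})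
    (hconn : IsConnectedSubset Q X1)
    (hdead : ∀ x ∈ X1, x ≠ star → ∀ y ∈ X2, y ≠ star → Q x y = 0 ∧ Q y x = 0) :
    IsRetraction Q X1 (fun x => if x ∈ X1 then x else star) ∧
      HasRetractionProperty Q X1 :=  by
  obtain ⟨hQnn, hQdiag, hirr, hpm, hpmpos, hrev⟩ := hMT
  have hstar : star ∈ X1 ∩ X2 := hinter ▸ rfl
  have hstar1 : star ∈ X1 := hstar.1
  have hX2 : ∀ x, x ∉ X1 → x ∈ X2 := fun x hx => by
    have hx' : x ∈ X1 ∪ X2 := hcover ▸ Set.mem_univ x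
    exact hx'.resolve_left hx
  have hret : IsRetraction Q X1 (fun x => if x ∈ X1 then x else star) := by
    refine ⟨fun x => ?_, fun y hy => if_pos hy, ?_⟩
    · by_cases h : x ∈ X1 <;> simp [h, hstar1]
    · intro y hy y' hy' hne x hx
      by_cases hys : y' = star
      · have hxX1 : x ∈ X1 := by
          by_contra h
          simp only [h, if_neg, if_false] at hx
          exact hne (hx.symm.trans hys.symm)
        have hxy : x = y := by simpa [hxX1] using hx
        subst hxy
        rw [hys]
        refine le_of_eq (Finset.sum_eq_single_of_mem star
          (Finset.mem_filter.mpr ⟨Finset.mem_univ _, if_pos hstar1⟩) ?_)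
        intro b hb hbne
        simp only [Finset.mem_filter] at hb
        have hbX1 : b ∉ X1 := by
          intro hbX1; exact hbne (by simpa [hbX1] using hb.2)
        exact (hdead x hy (fun h => hne (h.trans hys.symm)) b (hX2 b hbX1)
          (fun h => hbX1 (h ▸ hstar1))).1
      · have hfilter : Finset.univ.filter
            (fun x' => (if x' ∈ X1 then x' else star) = y') = {y'} := by
          ext b
          simp only [Finset.mem_filter, Finset.mem_singleton, Finset.mem_univ, true_and]
          constructor
          · intro hb
            by_cases hbX1 : b ∈ X1
            · simpa [hbX1] using hb
            · rw [if_neg hbX1] at hb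
              exact absurd hb.symm hys
          · rintro rfl; simp [hy']
        rw [hfilter, Finset.sum_singleton]
        by_cases hxX1 : x ∈ X1
        · have hxy : x = y := by simpa [hxX1] using hx
          exact hxy ▸ le_refl _
        · have hxne : x ≠ star := fun h => hxX1 (h ▸ hstar1)
          have hz : Q x y' = 0 := (hdead y' hy' hys x (hX2 x hxX1) hxne).2
          rw [hz]; exact hQnn y y'
  exact ⟨hret, hconn, _, hret⟩
end
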